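/- arXiv:2104.03845 — 5 statements merged into one kernel-verified Lean document; each statement's English description precedes it below -/
import Mathlib

section
/- If U is an independent set of a simple graph G on n vertices with minimum degree δ, and μ_n is the largest eigenvalue of the Laplacian matrix of G, then |U| ≤ n(μ_n − δ)/μ_n (assuming G has at least one edge so that μ_n > 0). -/
open SimpleGraph Matrix

/-- The (unordered) eigenvalues of the Laplacian matrix of `G`. -/
noncomputable def lapEigs {V : Type*} [Fintype V] [DecidableEq V]
    (G : SimpleGraph V) [DecidableRel G.Adj] : V → ℝ :=
  (SimpleGraph.posSemidef_lapMatrix ℝ G).1.eigenvalues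

/-- `μ : Fin n → ℝ` is the nondecreasing list of Laplacian eigenvalues of `G`. -/
def IsLapSpectrum {V : Type*} [Fintype V] [DecidableEq V]
    (G : SimpleGraph V) [DecidableRel G.Adj] {n : ℕ} (μ : Fin n → ℝ) : Prop :=
  Monotone μ ∧ ∃ σ : Fin n ≃ V, ∀ i, μ i = lapEigs G (σ i)

lemma rayleigh {n : ℕ} (A : Matrix (Fin n) (Fin n) ℝ) (hA : A.IsHermitian)
    (M : ℝ) (hM : ∀ i, hA.eigenvalues i ≤ M) (x : Fin n → ℝ) :
    x ⬝ᵥ (A *ᵥ x) ≤ M * (x ⬝ᵥ x) := by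
  set U : Matrix (Fin n) (Fin n) ℝ := (hA.eigenvectorUnitary : Matrix (Fin n) (Fin n) ℝ) with hUdef
  have hUU : U * star U = 1 := Matrix.mem_unitaryGroup_iff.mp hA.eigenvectorUnitary.2
  have h1 : M • (1 : Matrix (Fin n) (Fin n) ℝ) - A =
      U * diagonal (fun i => M - hA.eigenvalues i) * star U := by
    conv_lhs => rw [hA.spectral_theorem]
    have hs : M • (1 : Matrix (Fin n) (Fin n) ℝ) = U * (M • (1 : Matrix (Fin n) (Fin n) ℝ)) * star U := by
      rw [mul_smul_comm, smul_mul_assoc, mul_one, hUU]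
    rw [Unitary.conjStarAlgAut_apply, ← hUdef]
    rw [hs, ← sub_mul, ← mul_sub]
    congr 2
    rw [smul_one_eq_diagonal]
    norm_num [RCLike.ofReal_real_eq_id]
  have hB : (M • (1 : Matrix (Fin n) (Fin n) ℝ) - A).PosSemidef := by
    rw [h1, Matrix.star_eq_conjTranspose]
    exact (Matrix.posSemidef_diagonal_iff.mpr fun i => sub_nonneg.mpr (hM i)).mul_mul_conjTranspose_same U
  have h2 := hB.dotProduct_mulVec_nonneg x
  simp only [star_trivial, sub_mulVec, smul_mulVec, one_mulVec, dotProduct_sub,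
    dotProduct_smul, smul_eq_mul] at h2
  linarith

theorem stmt0 {n : ℕ} [NeZero n] (hn : 1 ≤ n) (G : SimpleGraph (Fin n))
    [DecidableRel G.Adj] (hedge : ∃ v w, G.Adj v w)
    (μ : Fin n → ℝ) (hμ : IsLapSpectrum G μ)
    (U : Finset (Fin n)) (hU : ∀ u ∈ U, ∀ v ∈ U, ¬ G.Adj u v) :
    (U.card : ℝ) ≤ n * (μ ⟨n - 1, by omega⟩ - G.minDegree) / μ ⟨n - 1, by omega⟩ := by
  classical
  obtain ⟨hmono, σ, hσ⟩ := hμ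
  set M : ℝ := μ ⟨n - 1, by omega⟩ with hMdef
  have hL := SimpleGraph.posSemidef_lapMatrix ℝ G
  have hev : ∀ i, hL.1.eigenvalues i ≤ M := by
    intro v
    have h1 : hL.1.eigenvalues v = μ (σ.symm v) := by
      rw [hσ (σ.symm v), Equiv.apply_symm_apply]; rfl
    rw [h1]
    exact hmono (Fin.le_def.mpr (by have := (σ.symm v).isLt; simp; omega))
  have hray : ∀ x : Fin n → ℝ, x ⬝ᵥ (G.lapMatrix ℝ *ᵥ x) ≤ M * (x ⬝ᵥ x) :=
    fun x => rayleigh _ hL.1 M hev x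
  -- degrees are bounded by M
  have hdeg : ∀ v : Fin n, (G.degree v : ℝ) ≤ M := by
    intro v
    have h := hray (Pi.single v 1)
    simpa [single_dotProduct, dotProduct_single, Matrix.mulVec_single,
      SimpleGraph.lapMatrix, SimpleGraph.degMatrix, Matrix.sub_apply,
      Matrix.diagonal_apply_eq] using h
  have hn0 : (0 : ℝ) < n := by exact_mod_cast hn
  have hM1 : (1 : ℝ) ≤ M := by
    obtain ⟨v, w, hvw⟩ := hedge
    have h1 : 0 < G.degree v := by
      rw [G.degree_pos_iff_exists_adj]; exact ⟨w, hvw⟩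
    calc (1 : ℝ) ≤ (G.degree v : ℝ) := by exact_mod_cast h1
      _ ≤ M := hdeg v
  have hM0 : (0 : ℝ) < M := lt_of_lt_of_le one_pos hM1
  have hδM : (G.minDegree : ℝ) ≤ M := by
    have v : Fin n := ⟨0, by omega⟩
    calc (G.minDegree : ℝ) ≤ (G.degree v : ℝ) := by exact_mod_cast G.minDegree_le_degree v
      _ ≤ M := hdeg v
  set c : ℝ := (U.card : ℝ) with hcdef
  set x : Fin n → ℝ := fun v => (if v ∈ U then (n : ℝ) else 0) - c with hxdef
  -- quadratic form computation
  have hfirst : ∑ i, ∑ j, (if i ∈ U ∧ G.Adj i j then (n : ℝ)^2 else 0)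
      = (n : ℝ)^2 * ∑ i ∈ U, (G.degree i : ℝ) := by
    rw [← Finset.sum_subset U.subset_univ (fun i _ hi => by simp [hi]), Finset.mul_sum]
    refine Finset.sum_congr rfl fun i hi => ?_
    rw [G.degree_eq_sum_if_adj i, Finset.mul_sum]
    exact Finset.sum_congr rfl fun j _ => by by_cases h : G.Adj i j <;> simp [h, hi]
  have hsecond : ∑ i, ∑ j, (if j ∈ U ∧ G.Adj i j then (n : ℝ)^2 else 0)
      = (n : ℝ)^2 * ∑ i ∈ U, (G.degree i : ℝ) := by
    rw [Finset.sum_comm, ← hfirst]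
    exact Finset.sum_congr rfl fun j _ => Finset.sum_congr rfl fun i _ => if_congr (and_congr_right fun _ => G.adj_comm i j) rfl rfl
  have hterm : ∀ i j, (if G.Adj i j then (x i - x j)^2 else 0)
      = (if i ∈ U ∧ G.Adj i j then (n : ℝ)^2 else 0)
        + (if j ∈ U ∧ G.Adj i j then (n : ℝ)^2 else 0) := by
    intro i j
    by_cases hij : G.Adj i j
    · by_cases hi : i ∈ U <;> by_cases hj : j ∈ U
      · exact absurd hij (hU i hi j hj)
      · simp [hxdef, hi, hj, hij]
      · simp only [hxdef, hi, hj, hij, if_true, if_false, and_true, and_false, true_and]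
        ring
      · simp [hxdef, hi, hj, hij]
    · simp [hij]
  have hQ : x ⬝ᵥ (G.lapMatrix ℝ *ᵥ x) = (n : ℝ)^2 * ∑ i ∈ U, (G.degree i : ℝ) := by
    rw [← Matrix.toLinearMap₂'_apply', SimpleGraph.lapMatrix_toLinearMap₂']
    have hsplit : (∑ i, ∑ j, if G.Adj i j then (x i - x j)^2 else 0)
        = (∑ i, ∑ j, (if i ∈ U ∧ G.Adj i j then (n : ℝ)^2 else 0))
          + (∑ i, ∑ j, (if j ∈ U ∧ G.Adj i j then (n : ℝ)^2 else 0)) := by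
      rw [← Finset.sum_add_distrib]
      refine Finset.sum_congr rfl fun i _ => ?_
      rw [← Finset.sum_add_distrib]
      exact Finset.sum_congr rfl fun j _ => hterm i j
    rw [hsplit, hfirst, hsecond]
    ring
  have hxx : x ⬝ᵥ x = c * ((n : ℝ) - c) * n := by
    have hterm2 : ∀ v, x v * x v = if v ∈ U then ((n : ℝ) - c)^2 else c^2 := by
      intro v
      by_cases h : v ∈ U <;> simp [hxdef, h] <;> ring
    have hcard : U.card ≤ n := by simpa using U.card_le_univ
    rw [dotProduct]
    simp_rw [hterm2]
    rw [Finset.sum_ite, Finset.sum_const, Finset.sum_const]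
    have h1 : Finset.univ.filter (· ∈ U) = U := by ext v; simp
    have h2 : (Finset.univ.filter (¬ · ∈ U)).card = n - U.card := by
      rw [Finset.filter_not, h1]
      simp [Finset.card_sdiff_of_subset, Finset.subset_univ]
    rw [h1, h2]
    have : ((n - U.card : ℕ) : ℝ) = (n : ℝ) - c := by
      rw [hcdef, Nat.cast_sub hcard]
    simp only [nsmul_eq_mul, this, ← hcdef]
    ring
  have hsum : c * (G.minDegree : ℝ) ≤ ∑ i ∈ U, (G.degree i : ℝ) := by
    have := Finset.card_nsmul_le_sum U (fun i => (G.degree i : ℝ)) (G.minDegree : ℝ)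
      (fun i _ => Nat.cast_le.mpr (G.minDegree_le_degree i))
    simpa [nsmul_eq_mul, mul_comm] using this
  have key : (n : ℝ)^2 * (c * (G.minDegree : ℝ)) ≤ M * (c * ((n : ℝ) - c) * n) := by
    calc (n : ℝ)^2 * (c * (G.minDegree : ℝ))
        ≤ (n : ℝ)^2 * ∑ i ∈ U, (G.degree i : ℝ) := by
          apply mul_le_mul_of_nonneg_left hsum (by positivity)
      _ = x ⬝ᵥ (G.lapMatrix ℝ *ᵥ x) := hQ.symm
      _ ≤ M * (x ⬝ᵥ x) := hray x
      _ = M * (c * ((n : ℝ) - c) * n) := by rw [hxx]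
  rw [le_div_iff₀ hM0]
  rcases eq_or_lt_of_le (show (0 : ℝ) ≤ c by positivity) with h0 | h0
  · rw [← h0]
    have : (0 : ℝ) ≤ (n : ℝ) * (M - (G.minDegree : ℝ)) :=
      mul_nonneg (le_of_lt hn0) (sub_nonneg.mpr hδM)
    linarith
  · nlinarith [mul_pos hn0 h0, key]
end

section
/- Let G be a simple graph on n vertices with Laplacian eigenvalues 0 = μ_1 ≤ μ_2 ≤ … ≤ μ_n. If X and Y are disjoint nonempty vertex subsets with no edge between X and Y, then |X||Y| / ((n−|X|)(n−|Y|)) ≤ ((μ_n − μ_2)/(μ_n + μ_2))^2. -/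
open SimpleGraph Matrix

/-- The number of connected components of `G - S`. -/
noncomputable def numComp {V : Type*} (G : SimpleGraph V) (S : Finset V) : ℕ :=
  Nat.card (G.induce ((↑S : Set V)ᶜ)).ConnectedComponent

lemma sep_aux (c r x y N : ℝ) (hx : 1 ≤ x) (hy : 1 ≤ y)
    (hK : (c * (x * y)) ^ 2 ≤ r ^ 2 * (x * (N - x) * (y * (N - y)))) :
    x * y * (2 * c) ^ 2 ≤ (2 * r) ^ 2 * ((N - x) * (N - y)) := by
  nlinarith [hK, mul_pos (lt_of_lt_of_le zero_lt_one hx) (lt_of_lt_of_le zero_lt_one hy)]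

lemma sep_aux2 (x y N : ℝ) (hx : 1 ≤ x) (hy : 1 ≤ y) (hxyN : x + y ≤ N) :
    x * y ≤ (N - x) * (N - y) := by nlinarith

set_option maxHeartbeats 1000000 in
theorem stmt1 {n : ℕ} (hn : 2 ≤ n) (G : SimpleGraph (Fin n)) [DecidableRel G.Adj]
    (hedge : ∃ v w, G.Adj v w) (μ : Fin n → ℝ) (hμ : IsLapSpectrum G μ)
    (X Y : Finset (Fin n)) (hX : X.Nonempty) (hY : Y.Nonempty) (hXY : Disjoint X Y)
    (hsep : ∀ x ∈ X, ∀ y ∈ Y, ¬ G.Adj x y) :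
    ((X.card : ℝ) * Y.card) / (((n : ℝ) - X.card) * ((n : ℝ) - Y.card)) ≤
      ((μ ⟨n - 1, by omega⟩ - μ ⟨1, by omega⟩) / (μ ⟨n - 1, by omega⟩ + μ ⟨1, by omega⟩)) ^ 2 := by
  classical
  obtain ⟨hmono, σ, hσ⟩ := hμ
  set L : Matrix (Fin n) (Fin n) ℝ := G.lapMatrix ℝ with hLdef
  have hPSD : L.PosSemidef := SimpleGraph.posSemidef_lapMatrix ℝ G
  have hH : L.IsHermitian := hPSD.1
  set lam : Fin n → ℝ := hH.eigenvalues with hlamdef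
  set U : Matrix (Fin n) (Fin n) ℝ := (hH.eigenvectorUnitary : Matrix (Fin n) (Fin n) ℝ)
    with hUdef
  have hUU : U * star U = 1 := Matrix.mem_unitaryGroup_iff.mp hH.eigenvectorUnitary.2
  have hUU' : star U * U = 1 := Matrix.mem_unitaryGroup_iff'.mp hH.eigenvectorUnitary.2
  have hspec : L = U * Matrix.diagonal lam * star U := by
    have := hH.spectral_theorem
    rwa [RCLike.ofReal_real_eq_id, Function.id_comp] at this
  have hstarT : (star U : Matrix (Fin n) (Fin n) ℝ) = Uᵀ := by
    show Uᴴ = Uᵀ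
    exact Matrix.conjTranspose_eq_transpose_of_trivial U
  set C : (Fin n → ℝ) → (Fin n → ℝ) := fun p => star U *ᵥ p with hCdef
  have hdot : ∀ p q : Fin n → ℝ, C p ⬝ᵥ C q = p ⬝ᵥ q := by
    intro p q
    calc (star U *ᵥ p) ⬝ᵥ (star U *ᵥ q)
        = (p ᵥ* U) ⬝ᵥ (star U *ᵥ q) := by rw [hstarT, Matrix.mulVec_transpose]
      _ = p ⬝ᵥ q := by
          rw [Matrix.dotProduct_mulVec, Matrix.vecMul_vecMul, hUU, Matrix.vecMul_one]
  have hquad : ∀ p q : Fin n → ℝ, p ⬝ᵥ (L *ᵥ q) = ∑ j, lam j * (C p j * C q j) := by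
    intro p q
    rw [hspec, ← Matrix.mulVec_mulVec, ← Matrix.mulVec_mulVec, Matrix.dotProduct_mulVec,
      ← Matrix.mulVec_transpose, ← hstarT]
    simp only [dotProduct, Matrix.mulVec_diagonal, hCdef]
    exact Finset.sum_congr rfl fun j _ => by ring
  have ho : L *ᵥ (fun _ => (1:ℝ)) = 0 := G.lapMatrix_mulVec_const_eq_zero
  set o : Fin n → ℝ := fun _ => 1 with hodef
  set t : Fin n → ℝ := C o with htdef
  have hrecov : ∀ p : Fin n → ℝ, U *ᵥ C p = p := by
    intro p
    rw [hCdef, Matrix.mulVec_mulVec, hUU, Matrix.one_mulVec]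
  have htj : ∀ j, lam j * t j = 0 := by
    have h2 : Matrix.diagonal lam *ᵥ t = 0 := by
      have h3 : star U *ᵥ (L *ᵥ o) = 0 := by rw [ho, Matrix.mulVec_zero]
      rw [hspec, ← Matrix.mulVec_mulVec, ← Matrix.mulVec_mulVec, Matrix.mulVec_mulVec,
        hUU', Matrix.one_mulVec] at h3
      exact h3
    intro j
    have := congrFun h2 j
    simpa [Matrix.mulVec_diagonal] using this
  have ht0 : t ≠ 0 := by
    intro h
    have : o = 0 := by rw [← hrecov o, ← htdef, h, Matrix.mulVec_zero]
    exact one_ne_zero (congrFun this ⟨0, by omega⟩)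
  have hμlam : ∀ i, μ i = lam (σ i) := hσ
  have hnn : ∀ j, 0 ≤ lam j := hPSD.eigenvalues_nonneg
  set μ2 : ℝ := μ ⟨1, by omega⟩ with hμ2def
  set μn : ℝ := μ ⟨n - 1, by omega⟩ with hμndef
  have hlamrep : ∀ j, lam j = μ (σ.symm j) := by
    intro j
    rw [hμlam (σ.symm j), Equiv.apply_symm_apply]
  have hmax : ∀ j, lam j ≤ μn := by
    intro j
    rw [hlamrep j]
    exact hmono (Fin.le_def.mpr (by show ((σ.symm j) : ℕ) ≤ n - 1; have := (σ.symm j).isLt; omega))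
  have hμ2nn : 0 ≤ μ2 := by rw [hμ2def, hμlam]; exact hnn _
  have hμ2μn : μ2 ≤ μn := hmono (Fin.le_def.mpr (by show 1 ≤ n - 1; omega))
  -- μn > 0
  have hμnpos : 0 < μn := by
    obtain ⟨v, w, hvw⟩ := hedge
    have hLvv : L v v ≠ 0 := by
      have hdeg : 0 < G.degree v := G.degree_pos_iff_exists_adj v |>.mpr ⟨w, hvw⟩
      have : L v v = (G.degree v : ℝ) := by
        show G.lapMatrix ℝ v v = _
        simp [SimpleGraph.lapMatrix, SimpleGraph.degMatrix]
      rw [this]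
      positivity
    have hex : ∃ j, lam j ≠ 0 := by
      by_contra h
      push_neg at h
      apply hLvv
      have : L = 0 := by
        rw [hspec]
        have hl : lam = 0 := funext h
        have hd : Matrix.diagonal (0 : Fin n → ℝ) = 0 := Matrix.diagonal_zero
        rw [hl, hd, Matrix.mul_zero, Matrix.zero_mul]
      rw [this]
      simp
    obtain ⟨j, hj⟩ := hex
    have : 0 < lam j := lt_of_le_of_ne (hnn j) (Ne.symm hj)
    exact lt_of_lt_of_le this (hmax j)
  -- basic cardinality facts
  set x : ℝ := (X.card : ℝ) with hxdef
  set y : ℝ := (Y.card : ℝ) with hydef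
  set N : ℝ := (n : ℝ) with hNdef
  have hx1 : 1 ≤ x := by
    rw [hxdef]; exact_mod_cast Finset.one_le_card.mpr hX
  have hy1 : 1 ≤ y := by
    rw [hydef]; exact_mod_cast Finset.one_le_card.mpr hY
  have hxyN : x + y ≤ N := by
    rw [hxdef, hydef, hNdef]
    have h1 : X.card + Y.card ≤ n := by
      rw [← Finset.card_union_of_disjoint hXY]
      simpa using Finset.card_le_univ (X ∪ Y)
    exact_mod_cast h1
  have hNpos : (0:ℝ) < N := by
    rw [hNdef]
    have : (0:ℕ) < n := by omega
    exact_mod_cast this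
  have hNx : 0 < N - x := by linarith
  have hNy : 0 < N - y := by linarith
  -- indicator vectors
  set indX : Fin n → ℝ := fun i => if i ∈ X then 1 else 0 with hindX
  set indY : Fin n → ℝ := fun i => if i ∈ Y then 1 else 0 with hindY
  have hsumX : ∑ i, indX i = x := by
    rw [hindX, hxdef]
    simp [Finset.sum_ite_mem]
  have hsumY : ∑ i, indY i = y := by
    rw [hindY, hydef]
    simp [Finset.sum_ite_mem]
  have hXsq : ∀ i, indX i * indX i = indX i := by
    intro i; rw [hindX]; by_cases h : i ∈ X <;> simp [h]
  have hYsq : ∀ i, indY i * indY i = indY i := by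
    intro i; rw [hindY]; by_cases h : i ∈ Y <;> simp [h]
  have hXY0 : ∀ i, indX i * indY i = 0 := by
    intro i; rw [hindX, hindY]
    by_cases h : i ∈ X
    · simp [h, Finset.disjoint_left.mp hXY h]
    · simp [h]
  have hlin : ∀ (c1 c2 c3 : ℝ), ∑ i : Fin n, (c1 * indX i + c2 * indY i + c3)
      = c1 * x + c2 * y + N * c3 := by
    intro c1 c2 c3
    rw [Finset.sum_add_distrib, Finset.sum_add_distrib, ← Finset.mul_sum, ← Finset.mul_sum,
      hsumX, hsumY, Finset.sum_const, Finset.card_univ, Fintype.card_fin, hNdef,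
      nsmul_eq_mul]
  set a : ℝ := x / N with hadef
  set b : ℝ := y / N with hbdef
  set u : Fin n → ℝ := fun i => indX i - a with hudef
  set v : Fin n → ℝ := fun i => indY i - b with hvdef
  have huo : u ⬝ᵥ o = 0 := by
    show ∑ i : Fin n, u i * o i = 0
    calc ∑ i : Fin n, u i * o i = ∑ i : Fin n, (1 * indX i + 0 * indY i + (-a)) :=
          Finset.sum_congr rfl (fun i _ => by rw [hudef, hodef]; ring)
      _ = 0 := by rw [hlin]; rw [hadef]; field_simp; ring
  have hvo : v ⬝ᵥ o = 0 := by
    show ∑ i : Fin n, v i * o i = 0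
    calc ∑ i : Fin n, v i * o i = ∑ i : Fin n, (0 * indX i + 1 * indY i + (-b)) :=
          Finset.sum_congr rfl (fun i _ => by rw [hvdef, hodef]; ring)
      _ = 0 := by rw [hlin]; rw [hbdef]; field_simp; ring
  have huu : N * (u ⬝ᵥ u) = x * (N - x) := by
    have h1 : u ⬝ᵥ u = (1 - 2*a) * x + 0 * y + N * (a*a) := by
      show ∑ i : Fin n, u i * u i = _
      rw [← hlin]
      refine Finset.sum_congr rfl (fun i _ => ?_)
      rw [hudef]
      linear_combination hXsq i
    rw [h1, hadef]
    field_simp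
    ring
  have hvv : N * (v ⬝ᵥ v) = y * (N - y) := by
    have h1 : v ⬝ᵥ v = 0 * x + (1 - 2*b) * y + N * (b*b) := by
      show ∑ i : Fin n, v i * v i = _
      rw [← hlin]
      refine Finset.sum_congr rfl (fun i _ => ?_)
      rw [hvdef]
      linear_combination hYsq i
    rw [h1, hbdef]
    field_simp
    ring
  have huv : N * (u ⬝ᵥ v) = -(x * y) := by
    have h1 : u ⬝ᵥ v = (-b) * x + (-a) * y + N * (a*b) := by
      show ∑ i : Fin n, u i * v i = _
      rw [← hlin]
      refine Finset.sum_congr rfl (fun i _ => ?_)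
      rw [hudef, hvdef]
      linear_combination hXY0 i
    rw [h1, hadef, hbdef]
    field_simp
    ring
  -- the quadratic form vanishes on (u, v)
  have hL0 : ∀ i ∈ X, ∀ j ∈ Y, L i j = 0 := by
    intro i hi j hj
    have hne : i ≠ j := fun h => (Finset.disjoint_left.mp hXY hi) (h ▸ hj)
    show G.lapMatrix ℝ i j = 0
    simp [SimpleGraph.lapMatrix, SimpleGraph.degMatrix, Matrix.diagonal_apply_ne _ hne,
      hsep i hi j hj]
  have hsym : Lᵀ = L := G.isSymm_lapMatrix (R := ℝ)
  have hoL : o ᵥ* L = 0 := by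
    rw [← Matrix.mulVec_transpose, hsym, ho]
  have hXLY : indX ⬝ᵥ (L *ᵥ indY) = 0 := by
    show ∑ i : Fin n, indX i * (L *ᵥ indY) i = 0
    refine Finset.sum_eq_zero (fun i _ => ?_)
    by_cases hi : i ∈ X
    · have : (L *ᵥ indY) i = 0 := by
        show ∑ j : Fin n, L i j * indY j = 0
        refine Finset.sum_eq_zero (fun j _ => ?_)
        by_cases hj : j ∈ Y
        · rw [hL0 i hi j hj, zero_mul]
        · rw [hindY]; simp [hj]
      rw [this, mul_zero]
    · rw [hindX]; simp [hi]
  have hueq : u = indX - a • o := by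
    funext i
    rw [hudef, hodef]
    simp [Pi.sub_apply, Pi.smul_apply]
  have hveq : v = indY - b • o := by
    funext i
    rw [hvdef, hodef]
    simp [Pi.sub_apply, Pi.smul_apply]
  have hLuv : u ⬝ᵥ (L *ᵥ v) = 0 := by
    rw [hveq, Matrix.mulVec_sub, Matrix.mulVec_smul, ho, smul_zero, sub_zero, hueq,
      sub_dotProduct, smul_dotProduct, hXLY,
      Matrix.dotProduct_mulVec, hoL, zero_dotProduct, smul_zero, sub_zero]
  -- coordinates in the eigenbasis
  set au : Fin n → ℝ := C u with haudef
  set bv : Fin n → ℝ := C v with hbvdef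
  have hauau : ∑ j, au j ^ 2 = u ⬝ᵥ u := by
    rw [← hdot u u]
    show _ = ∑ j : Fin n, au j * au j
    exact Finset.sum_congr rfl fun j _ => pow_two (au j)
  have hbvbv : ∑ j, bv j ^ 2 = v ⬝ᵥ v := by
    rw [← hdot v v]
    show _ = ∑ j : Fin n, bv j * bv j
    exact Finset.sum_congr rfl fun j _ => pow_two (bv j)
  have haubv : ∑ j, au j * bv j = u ⬝ᵥ v := hdot u v
  have hquaduv : ∑ j, lam j * (au j * bv j) = 0 := by rw [← hquad u v]; exact hLuv
  -- case split on μ2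
  by_cases hμ2pos : 0 < μ2
  · -- main case
    set c : ℝ := (μ2 + μn) / 2 with hcdef
    set r : ℝ := (μn - μ2) / 2 with hrdef
    have hc : 0 < c := by rw [hcdef]; linarith
    have hr : 0 ≤ r := by rw [hrdef]; linarith
    set i0 : Fin n := σ ⟨0, by omega⟩ with hi0def
    have hlamlb : ∀ j, j ≠ i0 → μ2 ≤ lam j := by
      intro j hj
      rw [hlamrep j]
      apply hmono
      rw [Fin.le_def]
      show 1 ≤ (σ.symm j : ℕ)
      by_contra hcon
      push_neg at hcon
      have h0 : (σ.symm j : ℕ) = 0 := by omega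
      apply hj
      have h1 : σ.symm j = ⟨0, by omega⟩ := Fin.ext h0
      rw [hi0def, ← h1, Equiv.apply_symm_apply]
    have ht' : ∀ j, j ≠ i0 → t j = 0 := by
      intro j hj
      have h1 : lam j ≠ 0 := ne_of_gt (lt_of_lt_of_le hμ2pos (hlamlb j hj))
      exact (mul_eq_zero.mp (htj j)).resolve_left h1
    have hti0 : t i0 ≠ 0 := by
      intro h
      apply ht0
      funext j
      by_cases hj : j = i0
      · rw [hj]; exact h
      · exact ht' j hj
    have hperp : ∀ p : Fin n → ℝ, p ⬝ᵥ o = 0 → C p i0 = 0 := by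
      intro p hp
      have h1 : C p ⬝ᵥ t = 0 := by rw [htdef, hdot p o, hp]
      have h2 : ∑ j, C p j * t j = C p i0 * t i0 :=
        Finset.sum_eq_single i0 (fun j _ hj => by rw [ht' j hj, mul_zero])
          (fun h => absurd (Finset.mem_univ i0) h)
      have h3 : C p i0 * t i0 = 0 := by rw [← h2]; exact h1
      exact (mul_eq_zero.mp h3).resolve_right hti0
    have hau0 : au i0 = 0 := hperp u huo
    have hbv0 : bv i0 = 0 := hperp v hvo
    have huv' : u ⬝ᵥ v = -(x * y) / N := by
      rw [eq_div_iff (ne_of_gt hNpos)]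
      linarith [huv]
    have hS : ∑ j, (lam j - c) * (au j * bv j) = c * (x * y) / N := by
      have h1 : ∀ j : Fin n, (lam j - c) * (au j * bv j)
          = lam j * (au j * bv j) - c * (au j * bv j) := fun j => by ring
      rw [Finset.sum_congr rfl (fun j _ => h1 j), Finset.sum_sub_distrib, hquaduv,
        ← Finset.mul_sum, haubv, huv']
      field_simp
      ring
    have hterm : ∀ j : Fin n, (lam j - c) * (au j * bv j) ≤ r * (|au j| * |bv j|) := by
      intro j
      by_cases hj : j = i0
      · rw [hj, hau0]
        simp
      · have h1 : μ2 ≤ lam j := hlamlb j hj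
        have h2 : lam j ≤ μn := hmax j
        have habs : |lam j - c| ≤ r :=
          abs_le.mpr ⟨by rw [hcdef, hrdef] at *; linarith, by rw [hcdef, hrdef] at *; linarith⟩
        calc (lam j - c) * (au j * bv j) ≤ |(lam j - c) * (au j * bv j)| := le_abs_self _
          _ = |lam j - c| * (|au j| * |bv j|) := by rw [abs_mul, abs_mul]
          _ ≤ r * (|au j| * |bv j|) := mul_le_mul_of_nonneg_right habs (by positivity)
    have hCS : ∑ j, |au j| * |bv j| ≤ Real.sqrt (u ⬝ᵥ u) * Real.sqrt (v ⬝ᵥ v) := by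
      have h1 := Real.sum_mul_le_sqrt_mul_sqrt Finset.univ (fun j => |au j|) (fun j => |bv j|)
      simpa [sq_abs, hauau, hbvbv] using h1
    have hmain : c * (x * y) / N ≤ r * (Real.sqrt (u ⬝ᵥ u) * Real.sqrt (v ⬝ᵥ v)) := by
      rw [← hS]
      calc ∑ j, (lam j - c) * (au j * bv j) ≤ ∑ j, r * (|au j| * |bv j|) :=
            Finset.sum_le_sum (fun j _ => hterm j)
        _ = r * ∑ j, |au j| * |bv j| := by rw [Finset.mul_sum]
        _ ≤ r * (Real.sqrt (u ⬝ᵥ u) * Real.sqrt (v ⬝ᵥ v)) :=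
            mul_le_mul_of_nonneg_left hCS hr
    have hN0 : N ≠ 0 := ne_of_gt hNpos
    have huuval : u ⬝ᵥ u = x * (N - x) / N := by
      rw [eq_div_iff hN0]; linear_combination huu
    have hvvval : v ⬝ᵥ v = y * (N - y) / N := by
      rw [eq_div_iff hN0]; linear_combination hvv
    have huunn : 0 ≤ u ⬝ᵥ u := by
      rw [huuval]
      exact div_nonneg (mul_nonneg (le_trans zero_le_one hx1) (le_of_lt hNx)) (le_of_lt hNpos)
    have hvvnn : 0 ≤ v ⬝ᵥ v := by
      rw [hvvval]
      exact div_nonneg (mul_nonneg (le_trans zero_le_one hy1) (le_of_lt hNy)) (le_of_lt hNpos)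
    have hsqrtsq : (Real.sqrt (u ⬝ᵥ u) * Real.sqrt (v ⬝ᵥ v)) ^ 2 = (u ⬝ᵥ u) * (v ⬝ᵥ v) := by
      rw [mul_pow, Real.sq_sqrt huunn, Real.sq_sqrt hvvnn]
    have hLHSnn : 0 ≤ c * (x * y) / N :=
      div_nonneg (mul_nonneg hc.le (mul_nonneg (by linarith) (by linarith))) hNpos.le
    have hsq2 : (c * (x * y) / N) ^ 2 ≤ r ^ 2 * ((u ⬝ᵥ u) * (v ⬝ᵥ v)) := by
      have h1 := pow_le_pow_left₀ hLHSnn hmain 2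
      rwa [mul_pow, hsqrtsq] at h1
    rw [huuval, hvvval] at hsq2
    have hK : (c * (x * y)) ^ 2 ≤ r ^ 2 * (x * (N - x) * (y * (N - y))) := by
      have hN2 : (0:ℝ) < N ^ 2 := by positivity
      have h1 := mul_le_mul_of_nonneg_right hsq2 (le_of_lt hN2)
      calc (c * (x * y)) ^ 2 = (c * (x * y) / N) ^ 2 * N ^ 2 := by field_simp
        _ ≤ r ^ 2 * ((x * (N - x) / N) * (y * (N - y) / N)) * N ^ 2 := h1
        _ = r ^ 2 * (x * (N - x) * (y * (N - y)) / N ^ 2) * N ^ 2 := by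
            rw [div_mul_div_comm, ← sq]
        _ = r ^ 2 * (x * (N - x) * (y * (N - y))) := by
            rw [mul_assoc, div_mul_cancel₀ _ (pow_ne_zero 2 hN0)]
    have h2c : μn + μ2 = 2 * c := by rw [hcdef]; ring
    have h2r : μn - μ2 = 2 * r := by rw [hrdef]; ring
    rw [div_pow, div_le_div_iff₀ (mul_pos hNx hNy)
      (pow_pos (by linarith : (0:ℝ) < μn + μ2) 2), h2c, h2r]
    exact sep_aux c r x y N hx1 hy1 hK
  · -- μ2 = 0
    have hμ20 : μ2 = 0 := le_antisymm (not_lt.mp hμ2pos) hμ2nn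
    rw [hμ20, sub_zero, add_zero, div_self (ne_of_gt hμnpos), one_pow,
      div_le_one (mul_pos hNx hNy)]
    exact sep_aux2 x y N hx1 hy1 hxyN
end

section
/- Let G be a simple graph on n vertices with at least one edge, S a vertex set such that G − S is disconnected, and X, Y a partition of V∖S into two nonempty parts with no edges between them and |X| ≤ |Y|. Then |X| ≤ n(μ_n − μ_2)/(2μ_n). -/
open SimpleGraph Matrix

section helpers
variable {m : ℕ} {A : Matrix (Fin m) (Fin m) ℝ} (hA : A.IsHermitian)

lemma dot_transfer (u v : Fin m → ℝ) :
    (star (hA.eigenvectorUnitary : Matrix (Fin m) (Fin m) ℝ) *ᵥ u) ⬝ᵥ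
      (star (hA.eigenvectorUnitary : Matrix (Fin m) (Fin m) ℝ) *ᵥ v) = u ⬝ᵥ v := by
  set U := (hA.eigenvectorUnitary : Matrix (Fin m) (Fin m) ℝ) with hU
  have hsU : star U = Uᵀ := by
    rw [star_eq_conjTranspose, conjTranspose_eq_transpose_of_trivial]
  rw [hsU, mulVec_transpose, ← dotProduct_mulVec, mulVec_mulVec, ← hsU,
    Matrix.mem_unitaryGroup_iff.mp (IsHermitian.eigenvectorUnitary hA).2, one_mulVec]

lemma quad_expand (v : Fin m → ℝ) :
    v ⬝ᵥ (A *ᵥ v) = ∑ i, hA.eigenvalues i *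
      ((star (hA.eigenvectorUnitary : Matrix (Fin m) (Fin m) ℝ) *ᵥ v) i)^2 := by
  set U := (hA.eigenvectorUnitary : Matrix (Fin m) (Fin m) ℝ) with hU
  have hsU : star U = Uᵀ := by
    rw [star_eq_conjTranspose, conjTranspose_eq_transpose_of_trivial]
  conv_lhs => rw [hA.spectral_theorem, Unitary.conjStarAlgAut_apply]
  rw [← mulVec_mulVec, ← mulVec_mulVec, dotProduct_mulVec, ← mulVec_transpose, ← hsU]
  simp only [dotProduct, mulVec_diagonal, Function.comp]
  refine Finset.sum_congr rfl fun i _ => ?_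
  simp only [RCLike.ofReal_real_eq_id, id_eq]
  ring

lemma diag_component (hA1 : A *ᵥ (fun _ => (1:ℝ)) = 0) (i : Fin m) :
    hA.eigenvalues i *
      ((star (hA.eigenvectorUnitary : Matrix (Fin m) (Fin m) ℝ) *ᵥ (fun _ => (1:ℝ))) i) = 0 := by
  set U := (hA.eigenvectorUnitary : Matrix (Fin m) (Fin m) ℝ) with hU
  have h : (star U) *ᵥ (A *ᵥ (fun _ => (1:ℝ))) = 0 := by rw [hA1, mulVec_zero]
  conv_lhs at h => rw [hA.spectral_theorem, Unitary.conjStarAlgAut_apply, ← hU, ← mulVec_mulVec, ← mulVec_mulVec,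
    mulVec_mulVec, Matrix.mem_unitaryGroup_iff'.mp (IsHermitian.eigenvectorUnitary hA).2,
    one_mulVec]
  have := congrFun h i
  simpa [mulVec_diagonal] using this

lemma rayleigh_max (M : ℝ) (hM : ∀ i, hA.eigenvalues i ≤ M) (v : Fin m → ℝ) :
    v ⬝ᵥ (A *ᵥ v) ≤ M * (v ⬝ᵥ v) := by
  rw [quad_expand hA v, ← dot_transfer hA v v]
  set c := (star (hA.eigenvectorUnitary : Matrix (Fin m) (Fin m) ℝ) *ᵥ v) with hc
  calc ∑ i, hA.eigenvalues i * (c i)^2 ≤ ∑ i, M * (c i)^2 :=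
        Finset.sum_le_sum fun i _ => mul_le_mul_of_nonneg_right (hM i) (sq_nonneg _)
    _ = M * (c ⬝ᵥ c) := by
        rw [dotProduct, Finset.mul_sum]
        exact Finset.sum_congr rfl fun i _ => by ring

lemma rayleigh_second (hm : 0 < m) (hA1 : A *ᵥ (fun _ => (1:ℝ)) = 0) (μ2 : ℝ)
    (hlow : ∀ i, hA.eigenvalues i ≠ 0 → μ2 ≤ hA.eigenvalues i)
    (huniq : ∀ i j, hA.eigenvalues i = 0 → hA.eigenvalues j = 0 → i = j)
    (v : Fin m → ℝ) (hv : (fun _ => (1:ℝ)) ⬝ᵥ v = 0) :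
    μ2 * (v ⬝ᵥ v) ≤ v ⬝ᵥ (A *ᵥ v) := by
  set e := (star (hA.eigenvectorUnitary : Matrix (Fin m) (Fin m) ℝ) *ᵥ (fun _ => (1:ℝ))) with he
  set c := (star (hA.eigenvectorUnitary : Matrix (Fin m) (Fin m) ℝ) *ᵥ v) with hc
  have he0 : ∀ i, hA.eigenvalues i * e i = 0 := fun i => diag_component hA hA1 i
  have hene : e ≠ 0 := by
    intro h
    have h1 : (fun _ : Fin m => (1:ℝ)) ⬝ᵥ (fun _ : Fin m => (1:ℝ)) = (0:ℝ) := by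
      have h2 := dot_transfer hA (fun _ : Fin m => (1:ℝ)) (fun _ : Fin m => (1:ℝ))
      rw [← h2, ← he, h, zero_dotProduct]
    rw [dotProduct] at h1
    simp only [mul_one, Finset.sum_const, Finset.card_univ, Fintype.card_fin,
      nsmul_eq_mul] at h1
    have : (0:ℝ) < m := by exact_mod_cast hm
    linarith
  obtain ⟨j, hj0⟩ := Function.ne_iff.mp hene
  have hj : e j ≠ 0 := hj0
  have hlamj : hA.eigenvalues j = 0 := by
    rcases mul_eq_zero.mp (he0 j) with h | h
    · exact h
    · exact absurd h hj
  have hne : ∀ i, i ≠ j → e i = 0 := by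
    intro i hij
    rcases mul_eq_zero.mp (he0 i) with h | h
    · exact absurd (huniq i j h hlamj) hij
    · exact h
  have hcj : c j = 0 := by
    have hec : e ⬝ᵥ c = 0 := by rw [he, hc, dot_transfer hA, hv]
    rw [dotProduct, Finset.sum_eq_single j (fun i _ hij => by rw [hne i hij, zero_mul])
      (fun h => absurd (Finset.mem_univ j) h)] at hec
    exact (mul_eq_zero.mp hec).resolve_left hj
  rw [quad_expand hA v, ← dot_transfer hA v v, ← hc]
  calc μ2 * (c ⬝ᵥ c) = ∑ i, μ2 * (c i)^2 := by
        rw [dotProduct, Finset.mul_sum]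
        exact Finset.sum_congr rfl fun i _ => by ring
    _ ≤ ∑ i, hA.eigenvalues i * (c i)^2 := by
        refine Finset.sum_le_sum fun i _ => ?_
        by_cases hij : i = j
        · subst hij; rw [hcj]; simp
        · have : hA.eigenvalues i ≠ 0 := fun h => hij (huniq i j h hlamj)
          exact mul_le_mul_of_nonneg_right (hlow i this) (sq_nonneg _)

end helpers


set_option maxHeartbeats 1600000 in
theorem stmt2 {n : ℕ} (hn : 2 ≤ n) (G : SimpleGraph (Fin n)) [DecidableRel G.Adj]
    (hedge : ∃ v w, G.Adj v w) (μ : Fin n → ℝ) (hμ : IsLapSpectrum G μ)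
    (S X Y : Finset (Fin n)) (hdis : 2 ≤ numComp G S)
    (hX : X.Nonempty) (hY : Y.Nonempty) (hXY : Disjoint X Y) (hpart : X ∪ Y = Sᶜ)
    (hsep : ∀ x ∈ X, ∀ y ∈ Y, ¬ G.Adj x y) (hcard : X.card ≤ Y.card) :
    (X.card : ℝ) ≤ (n : ℝ) * (μ ⟨n - 1, by omega⟩ - μ ⟨1, by omega⟩) / (2 * μ ⟨n - 1, by omega⟩) := by
  obtain ⟨hmono, σ, hσ⟩ := hμ
  set L := G.lapMatrix ℝ with hLdef
  have hL : L.IsHermitian := (SimpleGraph.posSemidef_lapMatrix ℝ G).1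
  have hLeigs : lapEigs G = hL.eigenvalues := rfl
  have hA1 : L *ᵥ (fun _ => (1:ℝ)) = 0 := G.lapMatrix_mulVec_const_eq_zero
  set μmax := μ ⟨n - 1, by omega⟩ with hμmax
  set μ1 := μ ⟨1, by omega⟩ with hμ1
  have hlam : ∀ i, hL.eigenvalues i = μ (σ.symm i) := by
    intro i
    rw [hσ (σ.symm i), hLeigs, Equiv.apply_symm_apply]
  have hmax : ∀ i, hL.eigenvalues i ≤ μmax := by
    intro i
    rw [hlam i]
    exact hmono (Fin.mk_le_mk.mpr (by omega) : σ.symm i ≤ ⟨n-1, by omega⟩)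
  have hnonneg : ∀ i, 0 ≤ hL.eigenvalues i :=
    fun i => (SimpleGraph.posSemidef_lapMatrix ℝ G).eigenvalues_nonneg i
  -- existence of a zero eigenvalue
  have hzero : ∃ j, hL.eigenvalues j = 0 := by
    have hdet : L.det = 0 := by
      rw [← Matrix.exists_mulVec_eq_zero_iff]
      refine ⟨fun _ => (1:ℝ), ?_, hA1⟩
      intro h
      have := congrFun h ⟨0, by omega⟩
      simp at this
    have hprod := hL.det_eq_prod_eigenvalues
    rw [hdet] at hprod
    obtain ⟨j, _, hj⟩ := Finset.prod_eq_zero_iff.mp hprod.symm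
    exact ⟨j, by exact_mod_cast hj⟩
  -- μmax is positive
  have hmaxpos : 0 < μmax := by
    obtain ⟨v, w, hvw⟩ := hedge
    set x : Fin n → ℝ := Pi.single v 1 with hx
    have hxLx : x ⬝ᵥ (L *ᵥ x) = G.degree v := by
      rw [hx, single_dotProduct, one_mul, SimpleGraph.lapMatrix_mulVec_apply]
      have h1 : Pi.single (M := fun _ : Fin n => ℝ) v 1 v = 1 := by simp
      have h2 : ∑ u ∈ G.neighborFinset v, Pi.single (M := fun _ : Fin n => ℝ) v 1 u = 0 := by
        refine Finset.sum_eq_zero fun u hu => ?_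
        exact Pi.single_eq_of_ne (G.ne_of_adj ((SimpleGraph.mem_neighborFinset G v u).mp hu)).symm 1
      rw [h1, h2]
      ring
    have hxx : x ⬝ᵥ x = 1 := by
      rw [hx, single_dotProduct, one_mul]; simp
    have hdeg : 0 < G.degree v := by
      rw [G.degree_pos_iff_exists_adj]
      exact ⟨w, hvw⟩
    by_contra hcon
    push_neg at hcon
    have := rayleigh_max hL μmax hmax x
    rw [hxLx, hxx, mul_one] at this
    have : (0:ℝ) < G.degree v := by exact_mod_cast hdeg
    linarith [rayleigh_max hL μmax hmax x, hxLx, hxx]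
  -- the test vectors
  set a : ℝ := (X.card : ℝ) with ha_def
  set b : ℝ := (Y.card : ℝ) with hb_def
  have ha : 0 < a := by rw [ha_def]; exact_mod_cast hX.card_pos
  have hb : 0 < b := by rw [hb_def]; exact_mod_cast hY.card_pos
  have hab : a ≤ b := by rw [ha_def, hb_def]; exact_mod_cast hcard
  have hnpos : (0:ℝ) < n := by positivity
  have habn : a + b ≤ n := by
    have h1 : (X ∪ Y).card = X.card + Y.card := Finset.card_union_of_disjoint hXY
    have h2 : (X ∪ Y).card ≤ n := le_trans (Finset.card_le_univ _) (by simp)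
    rw [ha_def, hb_def]
    exact_mod_cast h1 ▸ h2
  set z : Fin n → ℝ := fun v => if v ∈ X then b else if v ∈ Y then -a else 0 with hz_def
  set w : Fin n → ℝ := fun v => if v ∈ Y then -(z v) else z v with hw_def
  set m0 : ℝ := 2*a*b/n with hm0_def
  set w' : Fin n → ℝ := fun v => w v - m0 with hw'_def
  have hzX : ∀ v ∈ X, z v = b := fun v hv => if_pos hv
  have hzY : ∀ v ∈ Y, z v = -a := by
    intro v hv
    have hvX : v ∉ X := fun h => Finset.disjoint_left.mp hXY h hv
    simp [hz_def, hvX, hv]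
  have hzS : ∀ v ∈ (X ∪ Y)ᶜ, z v = 0 := by
    intro v hv
    rw [Finset.mem_compl, Finset.mem_union] at hv
    push_neg at hv
    simp [hz_def, hv.1, hv.2]
  have hwX : ∀ v ∈ X, w v = b := by
    intro v hv
    have hvY : v ∉ Y := fun h => Finset.disjoint_left.mp hXY hv h
    simp only [hw_def, if_neg hvY]
    exact hzX v hv
  have hwY : ∀ v ∈ Y, w v = a := by
    intro v hv
    simp only [hw_def, if_pos hv, hzY v hv, neg_neg]
  have hwS : ∀ v ∈ (X ∪ Y)ᶜ, w v = 0 := by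
    intro v hv
    have hvY : v ∉ Y := by
      rw [Finset.mem_compl, Finset.mem_union] at hv; push_neg at hv; exact hv.2
    simp only [hw_def, if_neg hvY]
    exact hzS v hv
  have hsum : ∀ f : Fin n → ℝ,
      ∑ v, f v = (∑ v ∈ X, f v) + (∑ v ∈ Y, f v) + ∑ v ∈ (X ∪ Y)ᶜ, f v := by
    intro f
    rw [← Finset.sum_add_sum_compl (X ∪ Y) f, Finset.sum_union hXY]
  have hconst : ∀ (T : Finset (Fin n)) (f : Fin n → ℝ) (c : ℝ), (∀ v ∈ T, f v = c) →
      ∑ v ∈ T, f v = T.card * c := by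
    intro T f c h
    rw [Finset.sum_congr rfl h, Finset.sum_const, nsmul_eq_mul]
  have hzsum : ∑ v, z v = 0 := by
    rw [hsum z, hconst X z b hzX, hconst Y z (-a) hzY, hconst ((X ∪ Y)ᶜ) z 0 hzS,
      ← ha_def, ← hb_def]
    ring
  have hznorm : z ⬝ᵥ z = a*b^2 + b*a^2 := by
    rw [dotProduct, hsum (fun v => z v * z v),
      hconst X (fun v => z v * z v) (b*b) (fun v hv => by show z v * z v = _; rw [hzX v hv]),
      hconst Y (fun v => z v * z v) (a*a) (fun v hv => by show z v * z v = _; rw [hzY v hv]; ring),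
      hconst ((X ∪ Y)ᶜ) (fun v => z v * z v) 0 (fun v hv => by show z v * z v = _; rw [hzS v hv]; ring),
      ← ha_def, ← hb_def]
    ring
  have hwsum : ∑ v, w v = 2*a*b := by
    rw [hsum w, hconst X w b hwX, hconst Y w a hwY, hconst ((X ∪ Y)ᶜ) w 0 hwS,
      ← ha_def, ← hb_def]
    ring
  have hwnorm : ∑ v, w v * w v = a*b^2 + b*a^2 := by
    rw [hsum (fun v => w v * w v),
      hconst X (fun v => w v * w v) (b*b) (fun v hv => by show w v * w v = _; rw [hwX v hv]),
      hconst Y (fun v => w v * w v) (a*a) (fun v hv => by show w v * w v = _; rw [hwY v hv]),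
      hconst ((X ∪ Y)ᶜ) (fun v => w v * w v) 0 (fun v hv => by show w v * w v = _; rw [hwS v hv]; ring),
      ← ha_def, ← hb_def]
    ring
  have hw'norm : w' ⬝ᵥ w' = (a*b^2 + b*a^2) - 4*a^2*b^2/n := by
    rw [dotProduct]
    calc ∑ v, w' v * w' v = ∑ v, (w v * w v - 2*m0*(w v) + m0^2) :=
          Finset.sum_congr rfl fun v _ => by rw [hw'_def]; ring
      _ = (∑ v, w v * w v) - 2*m0*(∑ v, w v) + n * m0^2 := by
          rw [Finset.sum_add_distrib, Finset.sum_sub_distrib, ← Finset.mul_sum,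
            Finset.sum_const, Finset.card_univ, Fintype.card_fin, nsmul_eq_mul]
      _ = (a*b^2 + b*a^2) - 4*a^2*b^2/n := by
          rw [hwnorm, hwsum, hm0_def]
          field_simp
          ring
  -- equality of quadratic forms
  have hpair : ∀ i j, G.Adj i j → (w' i - w' j)^2 = (z i - z j)^2 := by
    intro i j hadj
    have h1 : w' i - w' j = w i - w j := by rw [hw'_def]; ring
    rw [h1]
    by_cases hi : i ∈ Y <;> by_cases hj : j ∈ Y
    · simp only [hw_def, if_pos hi, if_pos hj]; ring
    · have hjX : j ∉ X := fun hjX => hsep j hjX i hi hadj.symm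
      have hjz : z j = 0 := by simp [hz_def, hjX, hj]
      simp only [hw_def, if_pos hi, if_neg hj]
      rw [hjz]; ring
    · have hiX : i ∉ X := fun hiX => hsep i hiX j hj hadj
      have hiz : z i = 0 := by simp [hz_def, hiX, hi]
      simp only [hw_def, if_neg hi, if_pos hj]
      rw [hiz]; ring
    · simp only [hw_def, if_neg hi, if_neg hj]
  have hQeq : z ⬝ᵥ (L *ᵥ z) = w' ⬝ᵥ (L *ᵥ w') := by
    have e1 : z ⬝ᵥ (L *ᵥ z) = (∑ i, ∑ j, if G.Adj i j then (z i - z j)^2 else 0) / 2 := by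
      rw [← Matrix.toLinearMap₂'_apply', hLdef, G.lapMatrix_toLinearMap₂' ℝ z]
    have e2 : w' ⬝ᵥ (L *ᵥ w') = (∑ i, ∑ j, if G.Adj i j then (w' i - w' j)^2 else 0) / 2 := by
      rw [← Matrix.toLinearMap₂'_apply', hLdef, G.lapMatrix_toLinearMap₂' ℝ w']
    rw [e1, e2]
    congr 1
    refine Finset.sum_congr rfl fun i _ => Finset.sum_congr rfl fun j _ => ?_
    by_cases h : G.Adj i j
    · rw [if_pos h, if_pos h, hpair i j h]
    · rw [if_neg h, if_neg h]
  -- lower bound via μ1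
  have hlower : μ1 * (z ⬝ᵥ z) ≤ z ⬝ᵥ (L *ᵥ z) := by
    by_cases hcase : μ1 ≤ 0
    · have h0 : 0 ≤ z ⬝ᵥ (L *ᵥ z) := by
        have := (SimpleGraph.posSemidef_lapMatrix ℝ G).dotProduct_mulVec_nonneg z
        simpa using this
      have h1 : 0 ≤ z ⬝ᵥ z := by
        rw [hznorm]; have := mul_pos ha (pow_pos hb 2); have := mul_pos hb (pow_pos ha 2); linarith
      nlinarith
    · push_neg at hcase
      refine rayleigh_second hL (by omega) hA1 μ1 ?_ ?_ z ?_
      · intro i hi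
        rw [hlam i] at hi ⊢
        rcases Nat.eq_zero_or_pos (σ.symm i : ℕ) with h0 | h0
        · exfalso
          obtain ⟨j, hj⟩ := hzero
          rw [hlam j] at hj
          have : μ (σ.symm i) ≤ μ (σ.symm j) := hmono (by
            rw [Fin.le_def]; omega)
          have hge : 0 ≤ μ (σ.symm i) := by rw [← hlam i]; exact hnonneg i
          exact hi (le_antisymm (hj ▸ this) hge)
        · exact hmono (show (⟨1, by omega⟩ : Fin n) ≤ σ.symm i by
            rw [Fin.le_def]; exact h0)
      · intro i j hi hj
        by_contra hij
        have hkij : σ.symm i ≠ σ.symm j := fun h => hij (by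
          have := congrArg σ h; simpa using this)
        have : (1:ℕ) ≤ (σ.symm i : ℕ) ∨ (1:ℕ) ≤ (σ.symm j : ℕ) := by
          rcases Nat.eq_zero_or_pos (σ.symm i : ℕ) with h0 | h0
          · right
            have : (σ.symm i : ℕ) ≠ (σ.symm j : ℕ) := fun h => hkij (Fin.ext h)
            omega
          · left; omega
        rcases this with h1 | h1
        · have : μ1 ≤ μ (σ.symm i) := hmono (show (⟨1, by omega⟩ : Fin n) ≤ σ.symm i by
            rw [Fin.le_def]; exact h1)
          rw [← hlam i, hi] at this
          linarith
        · have : μ1 ≤ μ (σ.symm j) := hmono (show (⟨1, by omega⟩ : Fin n) ≤ σ.symm j by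
            rw [Fin.le_def]; exact h1)
          rw [← hlam j, hj] at this
          linarith
      · rw [dotProduct]
        simpa using hzsum
  -- upper bound via μmax
  have hupper : w' ⬝ᵥ (L *ᵥ w') ≤ μmax * (w' ⬝ᵥ w') := rayleigh_max hL μmax hmax w'
  -- combine
  set N : ℝ := a*b^2 + b*a^2 with hN_def
  have hNpos : 0 < N := by rw [hN_def]; have := mul_pos ha (pow_pos hb 2); have := mul_pos hb (pow_pos ha 2); linarith
  have hkey : μ1 * N ≤ μmax * (N - 4*a^2*b^2/n) := by
    have h1 := hlower
    rw [hznorm] at h1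
    have h2 := hupper
    rw [hw'norm] at h2
    calc μ1 * N ≤ z ⬝ᵥ (L *ᵥ z) := h1
      _ = w' ⬝ᵥ (L *ᵥ w') := hQeq
      _ ≤ μmax * (N - 4*a^2*b^2/↑n) := h2
  have hkey2 : μ1 * N * n ≤ μmax * (N * n - 4*a^2*b^2) := by
    have := mul_le_mul_of_nonneg_right hkey (le_of_lt hnpos)
    calc μ1 * N * n ≤ μmax * (N - 4*a^2*b^2/n) * n := this
      _ = μmax * (N * n - 4*a^2*b^2) := by field_simp
  have hkey3 : μ1 * n * N ≤ μmax * (n - 2*a) * N := by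
    have hslack : (0:ℝ) ≤ 2*a^2*b*(b-a) :=
      mul_nonneg (mul_nonneg (mul_nonneg (by norm_num) (sq_nonneg a)) (le_of_lt hb)) (sub_nonneg.mpr hab)
    have hexp : μmax * (n - 2*a) * N - μmax * (N * n - 4*a^2*b^2) =
        μmax * (2*a^2*b*(b-a)) := by rw [hN_def]; ring
    linarith [hkey2, hexp, mul_nonneg (le_of_lt hmaxpos) hslack]
  have hfinal : μ1 * n ≤ μmax * (n - 2*a) :=
    le_of_mul_le_mul_right (by linarith [hkey3]) hNpos
  rw [le_div_iff₀ (by positivity : (0:ℝ) < 2 * μmax)]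
  nlinarith [hfinal]
end

section
/- If the complement of a non-complete simple graph G on n vertices is disconnected (equivalently μ_n = n), then t(G) ≥ μ_2/(μ_n − δ). -/
open SimpleGraph Matrix

open Finset

set_option linter.unusedSectionVars false


variable {V : Type*} [Fintype V] [DecidableEq V] {A : Matrix V V ℝ}

noncomputable def toE (y : V → ℝ) : EuclideanSpace ℝ V := (WithLp.equiv 2 (V → ℝ)).symm y

omit [DecidableEq V] in
lemma inner_toE (x y : V → ℝ) : inner (𝕜 := ℝ) (toE x) (toE y) = x ⬝ᵥ y := by
  simp only [toE, PiLp.inner_apply, RCLike.inner_apply, conj_trivial, dotProduct]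
  exact Finset.sum_congr rfl fun i _ => mul_comm _ _

noncomputable def ecoef (hA : A.IsHermitian) (y : V → ℝ) (i : V) : ℝ :=
  inner (𝕜 := ℝ) (hA.eigenvectorBasis i) (toE y)

lemma ecoef_eq_dot (hA : A.IsHermitian) (y : V → ℝ) (i : V) :
    ecoef hA y i = ⇑(hA.eigenvectorBasis i) ⬝ᵥ y := by
  rw [ecoef, ← inner_toE]
  rfl

lemma dot_eq_sum_coef (hA : A.IsHermitian) (y : V → ℝ) :
    y ⬝ᵥ y = ∑ i, ecoef hA y i ^ 2 := by
  have h := hA.eigenvectorBasis.sum_inner_mul_inner (toE y) (toE y)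
  rw [inner_toE] at h
  rw [← h]
  congr 1; ext i
  rw [ecoef, real_inner_comm]
  ring

lemma expand_fun (hA : A.IsHermitian) (y : V → ℝ) :
    y = ∑ i, ecoef hA y i • ⇑(hA.eigenvectorBasis i) := by
  have hy : ∑ i, ecoef hA y i • hA.eigenvectorBasis i = toE y :=
    hA.eigenvectorBasis.sum_repr' (toE y)
  have := congrArg (WithLp.equiv 2 (V → ℝ)) hy
  simpa [toE] using this.symm

lemma dot_mulVec_eq_sum_coef (hA : A.IsHermitian) (y : V → ℝ) :
    y ⬝ᵥ (A *ᵥ y) = ∑ i, hA.eigenvalues i * ecoef hA y i ^ 2 := by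
  have hAy : A *ᵥ y = ∑ i, (hA.eigenvalues i * ecoef hA y i) • ⇑(hA.eigenvectorBasis i) := by
    conv_lhs => rw [expand_fun hA y]
    rw [← Matrix.mulVecLin_apply, map_sum]
    congr 1; ext i
    rw [LinearMap.map_smul, Matrix.mulVecLin_apply, hA.mulVec_eigenvectorBasis, smul_smul, mul_comm]
  rw [hAy]
  simp only [dotProduct, Finset.sum_apply, Pi.smul_apply, smul_eq_mul, Finset.mul_sum]
  rw [Finset.sum_comm]
  congr 1; ext i
  have : ecoef hA y i = ∑ v, y v * hA.eigenvectorBasis i v := by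
    rw [ecoef_eq_dot, dotProduct_comm]; rfl
  calc ∑ v, y v * (hA.eigenvalues i * ecoef hA y i * (WithLp.equiv 2 (V → ℝ)) (hA.eigenvectorBasis i) v)
      = hA.eigenvalues i * ecoef hA y i * ∑ v, y v * hA.eigenvectorBasis i v := by
        rw [Finset.mul_sum]; congr 1; ext v; ring_nf; rfl
    _ = hA.eigenvalues i * ecoef hA y i ^ 2 := by rw [← this]; ring

lemma rayleigh_le_max (hA : A.IsHermitian) {M : ℝ} (hM : ∀ i, hA.eigenvalues i ≤ M)
    (y : V → ℝ) : y ⬝ᵥ (A *ᵥ y) ≤ M * (y ⬝ᵥ y) := by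
  rw [dot_mulVec_eq_sum_coef hA, dot_eq_sum_coef hA, Finset.mul_sum]
  exact Finset.sum_le_sum fun i _ => mul_le_mul_of_nonneg_right (hM i) (sq_nonneg _)

lemma min_le_rayleigh_of_coef_zero (hA : A.IsHermitian) {i₀ : V} {m : ℝ}
    (hm : ∀ i, i ≠ i₀ → m ≤ hA.eigenvalues i) (y : V → ℝ) (h0 : ecoef hA y i₀ = 0) :
    m * (y ⬝ᵥ y) ≤ y ⬝ᵥ (A *ᵥ y) := by
  rw [dot_mulVec_eq_sum_coef hA, dot_eq_sum_coef hA, Finset.mul_sum]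
  refine Finset.sum_le_sum fun i _ => ?_
  by_cases h : i = i₀
  · subst h; rw [h0]; simp
  · exact mul_le_mul_of_nonneg_right (hm i h) (sq_nonneg _)

omit [DecidableEq V] in
lemma dot_self_pos {y : V → ℝ} (hy : y ≠ 0) : 0 < y ⬝ᵥ y := by
  have h1 : 0 ≤ y ⬝ᵥ y := Finset.sum_nonneg fun i _ => mul_self_nonneg _
  rcases h1.lt_or_eq with h | h
  · exact h
  · exfalso; apply hy
    ext v
    have := (Finset.sum_eq_zero_iff_of_nonneg (fun i _ => mul_self_nonneg (y i))).mp h.symm v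
      (Finset.mem_univ v)
    have := mul_self_eq_zero.mp this
    simpa using this


section comb
variable {V : Type*} [Fintype V] [DecidableEq V] (G : SimpleGraph V) [DecidableRel G.Adj]
  (S : Finset V)

namespace aux9

abbrev Cmp := (G.induce ((↑S : Set V)ᶜ)).ConnectedComponent

noncomputable instance : Fintype (Cmp G S) := by classical exact Fintype.ofFinite _

/-- class of a vertex outside S -/
noncomputable def cmp (v : V) (h : v ∉ S) : Cmp G S :=
  (G.induce ((↑S : Set V)ᶜ)).connectedComponentMk ⟨v, by simp [h]⟩

/-- support of a component as a finset of V -/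
noncomputable def supp (K : Cmp G S) : Finset V := by
  classical exact univ.filter (fun v => ∃ h : v ∉ S, cmp G S v h = K)

lemma mem_supp {K : Cmp G S} {v : V} :
    v ∈ supp G S K ↔ ∃ h : v ∉ S, cmp G S v h = K := by
  classical simp [supp]

lemma supp_nonempty (K : Cmp G S) : ∃ v, v ∈ supp G S K := by
  obtain ⟨⟨v, hv⟩, h⟩ := K.exists_rep
  refine ⟨v, (mem_supp G S).mpr ⟨by simpa using hv, ?_⟩⟩
  exact h

omit [Fintype V] [DecidableEq V] [DecidableRel G.Adj] in
lemma cmp_eq_of_adj {u v : V} (hu : u ∉ S) (hv : v ∉ S) (h : G.Adj u v) :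
    cmp G S u hu = cmp G S v hv := by
  apply ConnectedComponent.sound
  exact SimpleGraph.Adj.reachable (by simpa using h)

lemma neighbor_subset {K : Cmp G S} {v : V} (hv : v ∈ supp G S K) :
    G.neighborFinset v ⊆ S ∪ (supp G S K).erase v := by
  intro w hw
  rw [mem_neighborFinset] at hw
  by_cases hws : w ∈ S
  · exact mem_union_left _ hws
  · refine mem_union_right _ (Finset.mem_erase.mpr ⟨hw.ne', ?_⟩)
    obtain ⟨hv', hK⟩ := (mem_supp G S).mp hv
    exact (mem_supp G S).mpr ⟨hws, by rw [cmp_eq_of_adj G S hws hv' hw.symm, hK]⟩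

lemma degree_lb {K : Cmp G S} {v : V} (hv : v ∈ supp G S K) :
    G.degree v + 1 ≤ S.card + (supp G S K).card := by
  have h1 : G.degree v ≤ S.card + ((supp G S K).erase v).card := by
    rw [degree]
    calc (G.neighborFinset v).card ≤ (S ∪ (supp G S K).erase v).card :=
          Finset.card_le_card (neighbor_subset G S hv)
      _ ≤ S.card + ((supp G S K).erase v).card := Finset.card_union_le _ _
  have h2 : ((supp G S K).erase v).card + 1 = (supp G S K).card :=
    Finset.card_erase_add_one hv
  omega

lemma sum_supp_card :
    ∑ K : Cmp G S, (supp G S K).card = (univ.filter (fun v => v ∉ S)).card := by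
  classical
  by_cases hne : Nonempty (Cmp G S)
  · obtain ⟨K0⟩ := hne
    set f : V → Cmp G S := fun v => if h : v ∉ S then cmp G S v h else K0 with hf
    rw [Finset.card_eq_sum_card_fiberwise (f := f) (t := univ) (fun x _ => mem_univ _)]
    apply Finset.sum_congr rfl
    intro K _
    congr 1
    ext v
    simp only [mem_supp, Finset.mem_filter, mem_univ, true_and]
    constructor
    · rintro ⟨h, hK⟩
      refine ⟨h, ?_⟩
      show (if h' : v ∉ S then cmp G S v h' else K0) = K
      rw [dif_pos h]; exact hK
    · rintro ⟨h, hK⟩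
      refine ⟨h, ?_⟩
      have : (if h' : v ∉ S then cmp G S v h' else K0) = K := hK
      rwa [dif_pos h] at this
  · have : IsEmpty (Cmp G S) := not_nonempty_iff.mp hne
    have h1 : univ.filter (fun v : V => v ∉ S) = ∅ := by
      rw [Finset.filter_eq_empty_iff]
      intro v _
      by_contra h
      exact hne ⟨cmp G S v h⟩
    simp [h1]

lemma card_comp_add_minDegree_le [Nonempty V] (hdis : 2 ≤ numComp G S) :
    numComp G S + G.minDegree ≤ Fintype.card V := by
  classical
  have hnum : numComp G S = Fintype.card (Cmp G S) := by
    rw [numComp, Nat.card_eq_fintype_card]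
  set c := Fintype.card (Cmp G S) with hc
  set m := (univ.filter (fun v : V => v ∉ S)).card with hm
  set s := S.card with hs
  set d := G.minDegree with hd
  have h0 : s + m = Fintype.card V := by
    have := Finset.card_filter_add_card_filter_not (s := (univ : Finset V))
      (p := fun v => v ∈ S)
    simpa [Finset.filter_mem_eq_inter] using this
  have hdK : ∀ K : Cmp G S, d + 1 ≤ s + (supp G S K).card := by
    intro K
    obtain ⟨v, hv⟩ := supp_nonempty G S K
    have h1 := degree_lb G S hv
    have h2 := G.minDegree_le_degree v
    omega
  have hsum : c * (d + 1) ≤ c * s + m := by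
    calc c * (d + 1) = ∑ _K : Cmp G S, (d + 1) := by
          rw [Finset.sum_const, smul_eq_mul, Finset.card_univ]
      _ ≤ ∑ K : Cmp G S, (s + (supp G S K).card) := Finset.sum_le_sum fun K _ => hdK K
      _ = c * s + m := by
          rw [Finset.sum_add_distrib, Finset.sum_const, sum_supp_card, smul_eq_mul,
            Finset.card_univ]
  have hcm : c ≤ m := by
    calc c = ∑ _K : Cmp G S, 1 := by
          rw [Finset.sum_const, smul_eq_mul, Finset.card_univ, mul_one]
      _ ≤ ∑ K : Cmp G S, (supp G S K).card := Finset.sum_le_sum fun K _ => by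
          obtain ⟨v, hv⟩ := supp_nonempty G S K
          exact Finset.card_pos.mpr ⟨v, hv⟩
      _ = m := sum_supp_card G S
  rw [hnum]
  have hc2 : 2 ≤ c := by rw [hnum] at hdis; omega
  rcases le_or_gt s d with hcase | hcase
  · obtain ⟨t, ht⟩ : ∃ t, d = s + t := ⟨d - s, by omega⟩
    have he : c * (d + 1) = c * s + (c * t + c) := by rw [ht]; ring
    have h3 : c * t + c ≤ m := by omega
    have h4 : t ≤ c * t := Nat.le_mul_of_pos_left t (by omega)
    omega
  · omega

lemma fiedler_vec (hdis : 2 ≤ numComp G S) :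
    ∃ x : V → ℝ, x ≠ 0 ∧ (∑ v, x v) = 0 ∧
      (∑ u, ∑ v, if G.Adj u v then (x u - x v)^2 else 0) ≤
        2 * S.card * (∑ v, x v * x v) := by
  classical
  have hnt : Nontrivial (aux9.Cmp G S) := by
    rw [← Finite.one_lt_card_iff_nontrivial]
    have : numComp G S = Nat.card (aux9.Cmp G S) := rfl
    omega
  obtain ⟨K1, K2, hK⟩ := hnt.exists_pair_ne
  set A1 := aux9.supp G S K1 with hA1
  set A2 := aux9.supp G S K2 with hA2
  set α := A1.card with hα
  set β := A2.card with hβ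
  have hdisj : ∀ v, v ∈ A1 → v ∈ A2 → False := by
    intro v h1 h2
    obtain ⟨hv1, hc1⟩ := (aux9.mem_supp G S).mp h1
    obtain ⟨hv2, hc2⟩ := (aux9.mem_supp G S).mp h2
    exact hK (hc1 ▸ hc2 ▸ rfl)
  set x : V → ℝ := fun v => if v ∈ A1 then (β:ℝ) else if v ∈ A2 then -(α:ℝ) else 0 with hx
  obtain ⟨v1, hv1⟩ := aux9.supp_nonempty G S K1
  obtain ⟨v2, hv2⟩ := aux9.supp_nonempty G S K2
  have hα1 : 1 ≤ α := Finset.card_pos.mpr ⟨v1, hv1⟩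
  have hβ1 : 1 ≤ β := Finset.card_pos.mpr ⟨v2, hv2⟩
  have hxv1 : x v1 = β := by rw [hx]; simp [show v1 ∈ A1 from hv1]
  have hxne : x ≠ 0 := by
    intro h
    have h2 := congrFun h v1
    rw [hxv1] at h2
    simp only [Pi.zero_apply, Nat.cast_eq_zero] at h2
    omega
  have hS0 : ∀ v ∈ S, x v = 0 := by
    intro v hvS
    have h1 : v ∉ A1 := fun h => ((aux9.mem_supp G S).mp h).1 hvS
    have h2 : v ∉ A2 := fun h => ((aux9.mem_supp G S).mp h).1 hvS
    simp [hx, h1, h2]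
  have hconst : ∀ u v, u ∉ S → v ∉ S → G.Adj u v → x u = x v := by
    intro u v hu hv hadj
    have hcmp := aux9.cmp_eq_of_adj G S hu hv hadj
    have hmem : ∀ K : aux9.Cmp G S,
        (u ∈ aux9.supp G S K ↔ v ∈ aux9.supp G S K) := by
      intro K
      simp only [aux9.mem_supp]
      constructor
      · rintro ⟨h, hKk⟩; exact ⟨hv, by rw [← hcmp]; exact hKk⟩
      · rintro ⟨h, hKk⟩; exact ⟨hu, by rw [hcmp]; exact hKk⟩
    by_cases h1 : u ∈ A1
    · simp [hx, h1, (show v ∈ A1 from (hmem K1).mp h1)]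
    · have h1' : v ∉ A1 := fun h => h1 ((hmem K1).mpr h)
      by_cases h2 : u ∈ A2
      · simp [hx, h1, h1', h2, (show v ∈ A2 from (hmem K2).mp h2)]
      · have h2' : v ∉ A2 := fun h => h2 ((hmem K2).mpr h)
        simp [hx, h1, h1', h2, h2']
  have hsum1 : ∑ v, (if v ∈ A1 then (1:ℝ) else 0) = α := by
    rw [Finset.sum_ite_mem, Finset.univ_inter, Finset.sum_const, nsmul_eq_mul, mul_one]
  have hsum2 : ∑ v, (if v ∈ A2 then (1:ℝ) else 0) = β := by
    rw [Finset.sum_ite_mem, Finset.univ_inter, Finset.sum_const, nsmul_eq_mul, mul_one]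
  have hind : ∀ v, x v =
      (β:ℝ) * (if v ∈ A1 then 1 else 0) - (α:ℝ) * (if v ∈ A2 then 1 else 0) := by
    intro v
    by_cases h1 : v ∈ A1
    · have h2 : v ∉ A2 := fun h => hdisj v h1 h
      simp [hx, h1, h2]
    · by_cases h2 : v ∈ A2 <;> simp [hx, h1, h2]
  have hsumx : (∑ v, x v) = 0 := by
    simp only [hind]
    rw [Finset.sum_sub_distrib, ← Finset.mul_sum, ← Finset.mul_sum, hsum1, hsum2]
    ring
  have hindsq : ∀ v, x v * x v =
      (β:ℝ)^2 * (if v ∈ A1 then 1 else 0) + (α:ℝ)^2 * (if v ∈ A2 then 1 else 0) := by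
    intro v
    by_cases h1 : v ∈ A1
    · have h2 : v ∉ A2 := fun h => hdisj v h1 h
      simp [hx, h1, h2]; ring
    · by_cases h2 : v ∈ A2 <;> simp [hx, h1, h2] <;> ring
  refine ⟨x, hxne, hsumx, ?_⟩
  have hpt : ∀ u v, (if G.Adj u v then (x u - x v)^2 else 0) ≤
      (if u ∈ S then x v^2 else 0) + (if v ∈ S then x u^2 else 0) := by
    intro u v
    by_cases hadj : G.Adj u v
    · rw [if_pos hadj]
      by_cases hu : u ∈ S
      · rw [hS0 u hu, if_pos hu]
        have h2 : (0:ℝ) ≤ if v ∈ S then (0:ℝ)^2 else 0 := by positivity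
        nlinarith [h2]
      · by_cases hv : v ∈ S
        · rw [hS0 v hv, if_neg hu, if_pos hv]
          have h2 : (0:ℝ) ≤ if u ∈ S then (0:ℝ)^2 else 0 := by positivity
          nlinarith [h2]
        · rw [hconst u v hu hv hadj, if_neg hu, if_neg hv]
          simp
    · rw [if_neg hadj]
      positivity
  calc (∑ u, ∑ v, if G.Adj u v then (x u - x v)^2 else 0)
      ≤ ∑ u, ∑ v, ((if u ∈ S then x v^2 else 0) + (if v ∈ S then x u^2 else 0)) :=
        Finset.sum_le_sum fun u _ => Finset.sum_le_sum fun v _ => hpt u v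
    _ = 2 * S.card * (∑ v, x v * x v) := by
        simp only [Finset.sum_add_distrib]
        have e1 : ∑ u : V, ∑ v : V, (if u ∈ S then x v^2 else 0) =
            S.card * (∑ v, x v * x v) := by
          have h3 : ∀ u : V, (∑ v, if u ∈ S then x v^2 else 0) =
              (if u ∈ S then (∑ v, x v * x v) else 0) := by
            intro u
            by_cases hu : u ∈ S <;> simp [hu, sq]
          rw [Finset.sum_congr rfl fun u _ => h3 u, Finset.sum_ite_mem, Finset.univ_inter,
            Finset.sum_const, nsmul_eq_mul]
        have e2 : ∑ u : V, ∑ v : V, (if v ∈ S then x u^2 else 0) =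
            S.card * (∑ v, x v * x v) := by
          have h3 : ∀ u : V, (∑ v, if v ∈ S then x u^2 else 0) = (S.card : ℝ) * x u ^2 := by
            intro u
            rw [Finset.sum_ite_mem, Finset.univ_inter, Finset.sum_const, nsmul_eq_mul]
          rw [Finset.sum_congr rfl fun u _ => h3 u, ← Finset.mul_sum]
          congr 1
          apply Finset.sum_congr rfl
          intro v _
          rw [sq]
        rw [e1, e2]
        ring

lemma join_vec [Nonempty V] (hcompl : ¬ (Gᶜ).Connected) :
    ∃ y : V → ℝ, y ≠ 0 ∧
      (Fintype.card V : ℝ) * (∑ v, y v * y v) ≤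
        (∑ u, ∑ v, if G.Adj u v then (y u - y v)^2 else 0) / 2 := by
  classical
  have hpre : ¬ (Gᶜ).Preconnected := by
    intro h
    exact hcompl ⟨h⟩
  rw [Preconnected] at hpre
  push_neg at hpre
  obtain ⟨u0, w0, hreach⟩ := hpre
  set A := univ.filter (fun v => (Gᶜ).Reachable u0 v) with hA
  have hu0 : u0 ∈ A := by simp only [hA, Finset.mem_filter, Finset.mem_univ, true_and]; exact Reachable.refl _
  have hw0 : w0 ∉ A := by simp [hA, hreach]
  set a := A.card with ha
  set b := (univ.filter (fun v => v ∉ A)).card with hb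
  have hab : a + b = Fintype.card V := by
    have h := Finset.card_filter_add_card_filter_not (s := (univ : Finset V))
      (p := fun v => v ∈ A)
    simpa [Finset.filter_mem_eq_inter] using h
  have ha1 : 1 ≤ a := Finset.card_pos.mpr ⟨u0, hu0⟩
  have hb1 : 1 ≤ b := Finset.card_pos.mpr ⟨w0, by simp [hw0]⟩
  have hadj : ∀ u v : V, u ∈ A → v ∉ A → G.Adj u v := by
    intro u v hu hv
    have hru : (Gᶜ).Reachable u0 u := by simpa [hA] using hu
    have hrv : ¬ (Gᶜ).Reachable u0 v := by simpa [hA] using hv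
    have hne : u ≠ v := by rintro rfl; exact hrv hru
    by_contra hadj
    have hc : (Gᶜ).Adj u v := by rw [compl_adj]; exact ⟨hne, hadj⟩
    exact hrv (hru.trans hc.reachable)
  set y : V → ℝ := fun v => if v ∈ A then (b:ℝ) else -(a:ℝ) with hy
  have hyne : y ≠ 0 := by
    intro h
    have h2 := congrFun h u0
    rw [hy] at h2
    simp only [hu0, if_pos, Pi.zero_apply, Nat.cast_eq_zero] at h2
    omega
  have hysq : (∑ v, y v * y v) = (a:ℝ) * b^2 + (b:ℝ) * a^2 := by
    have h3 : ∀ v, y v * y v =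
        (b:ℝ)^2 * (if v ∈ A then 1 else 0) + (a:ℝ)^2 * (if v ∉ A then 1 else 0) := by
      intro v
      by_cases h : v ∈ A <;> simp [hy, h] <;> ring
    simp only [h3]
    rw [Finset.sum_add_distrib, ← Finset.mul_sum, ← Finset.mul_sum]
    have e1 : ∑ v, (if v ∈ A then (1:ℝ) else 0) = a := by
      rw [Finset.sum_ite_mem, Finset.univ_inter, Finset.sum_const, nsmul_eq_mul, mul_one]
    have e2 : ∑ v, (if v ∉ A then (1:ℝ) else 0) = b := by
      rw [Finset.sum_boole, hb]
    rw [e1, e2]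
    ring
  refine ⟨y, hyne, ?_⟩
  have key : (a:ℝ) * b * (Fintype.card V)^2 + (a:ℝ) * b * (Fintype.card V)^2 ≤
      (∑ u, ∑ v, if G.Adj u v then (y u - y v)^2 else 0) := by
    have hnn : ∀ u v : V, (0:ℝ) ≤ if G.Adj u v then (y u - y v)^2 else 0 := by
      intro u v; positivity
    have hAeq : univ.filter (fun v => v ∈ A) = A := by
      rw [Finset.filter_mem_eq_inter, Finset.univ_inter]
    have hsplit := Finset.sum_filter_add_sum_filter_not univ (fun v => v ∈ A)
      (fun u => ∑ v, if G.Adj u v then (y u - y v)^2 else 0)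
    rw [hAeq] at hsplit
    have hterm : ∀ u v : V, u ∈ A → v ∉ A →
        (if G.Adj u v then (y u - y v)^2 else 0) = ((Fintype.card V : ℝ))^2 := by
      intro u v hu hv
      rw [if_pos (hadj u v hu hv), hy]
      simp only [hu, if_pos, hv, if_neg]
      rw [← hab]
      push_cast
      ring
    have hterm' : ∀ u v : V, u ∉ A → v ∈ A →
        (if G.Adj u v then (y u - y v)^2 else 0) = ((Fintype.card V : ℝ))^2 := by
      intro u v hu hv
      rw [if_pos ((hadj v u hv hu).symm), hy]
      simp only [hu, if_neg, hv, if_pos]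
      rw [← hab]
      push_cast
      ring
    have h1 : (a:ℝ) * b * (Fintype.card V)^2 ≤
        ∑ u ∈ A, ∑ v, if G.Adj u v then (y u - y v)^2 else 0 := by
      have step : ∀ u ∈ A, ((b:ℝ) * (Fintype.card V)^2) ≤
          ∑ v, if G.Adj u v then (y u - y v)^2 else 0 := by
        intro u hu
        calc ((b:ℝ) * (Fintype.card V)^2)
            = ∑ v ∈ univ.filter (fun v => v ∉ A), ((Fintype.card V : ℝ))^2 := by
              rw [Finset.sum_const, nsmul_eq_mul, hb]
          _ = ∑ v ∈ univ.filter (fun v => v ∉ A), (if G.Adj u v then (y u - y v)^2 else 0) := by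
              apply Finset.sum_congr rfl
              intro v hv
              rw [Finset.mem_filter] at hv
              rw [hterm u v hu hv.2]
          _ ≤ ∑ v, if G.Adj u v then (y u - y v)^2 else 0 :=
              Finset.sum_le_sum_of_subset_of_nonneg (Finset.subset_univ _)
                (fun v _ _ => hnn u v)
      calc (a:ℝ) * b * (Fintype.card V)^2 = ∑ _u ∈ A, ((b:ℝ) * (Fintype.card V)^2) := by
            rw [Finset.sum_const, nsmul_eq_mul, ha]; ring
        _ ≤ _ := Finset.sum_le_sum step
    have h2 : (a:ℝ) * b * (Fintype.card V)^2 ≤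
        ∑ u ∈ univ.filter (fun v => v ∉ A), ∑ v, if G.Adj u v then (y u - y v)^2 else 0 := by
      have step : ∀ u ∈ univ.filter (fun v => v ∉ A), ((a:ℝ) * (Fintype.card V)^2) ≤
          ∑ v, if G.Adj u v then (y u - y v)^2 else 0 := by
        intro u hu
        rw [Finset.mem_filter] at hu
        calc ((a:ℝ) * (Fintype.card V)^2)
            = ∑ v ∈ A, ((Fintype.card V : ℝ))^2 := by
              rw [Finset.sum_const, nsmul_eq_mul, ha]
          _ = ∑ v ∈ A, (if G.Adj u v then (y u - y v)^2 else 0) := by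
              apply Finset.sum_congr rfl
              intro v hv
              rw [hterm' u v hu.2 hv]
          _ ≤ ∑ v, if G.Adj u v then (y u - y v)^2 else 0 :=
              Finset.sum_le_sum_of_subset_of_nonneg (Finset.subset_univ _)
                (fun v _ _ => hnn u v)
      calc (a:ℝ) * b * (Fintype.card V)^2
          = ∑ _u ∈ univ.filter (fun v => v ∉ A), ((a:ℝ) * (Fintype.card V)^2) := by
            rw [Finset.sum_const, nsmul_eq_mul, hb]; ring
        _ ≤ _ := Finset.sum_le_sum step
    rw [← hsplit]
    exact add_le_add h1 h2
  have hn : (a:ℝ) + b = (Fintype.card V : ℝ) := by exact_mod_cast hab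
  rw [hysq, le_div_iff₀ (by norm_num : (0:ℝ) < 2)]
  have h2 : (Fintype.card V : ℝ) * ((a:ℝ) * b^2 + (b:ℝ) * a^2) * 2 =
      (a:ℝ) * b * (Fintype.card V)^2 + (a:ℝ) * b * (Fintype.card V)^2 := by
    rw [← hn]; ring
  linarith [key]

end aux9
end comb


theorem stmt9 {n : ℕ} [NeZero n] (hn : 2 ≤ n) (G : SimpleGraph (Fin n)) [DecidableRel G.Adj]
    (hnc : G ≠ ⊤) (hcompl : ¬ (Gᶜ).Connected) (μ : Fin n → ℝ) (hμ : IsLapSpectrum G μ)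
    (S : Finset (Fin n)) (hdis : 2 ≤ numComp G S) :
    μ ⟨1, by omega⟩ / (μ ⟨n - 1, by omega⟩ - G.minDegree) * numComp G S ≤ (S.card : ℝ) := by
  classical
  haveI : Nonempty (Fin n) := ⟨⟨0, by omega⟩⟩
  obtain ⟨hmono, σ, hσ⟩ := hμ
  set L : Matrix (Fin n) (Fin n) ℝ := G.lapMatrix ℝ with hL
  have hPSD : L.PosSemidef := posSemidef_lapMatrix ℝ G
  have hA : L.IsHermitian := hPSD.1
  have heig : ∀ i : Fin n, hA.eigenvalues i = μ (σ.symm i) := by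
    intro i
    have h1 : μ (σ.symm i) = lapEigs G (σ (σ.symm i)) := hσ (σ.symm i)
    rw [Equiv.apply_symm_apply] at h1
    rw [h1]
    rfl
  have hquad : ∀ x : Fin n → ℝ, x ⬝ᵥ (L *ᵥ x) =
      (∑ u, ∑ v, if G.Adj u v then (x u - x v)^2 else 0) / 2 := by
    intro x
    rw [← Matrix.toLinearMap₂'_apply', hL, lapMatrix_toLinearMap₂']
  set μ1 : ℝ := μ ⟨1, by omega⟩ with hμ1
  set μl : ℝ := μ ⟨n - 1, by omega⟩ with hμl
  -- largest eigenvalue is at least n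
  have hmax : (n : ℝ) ≤ μl := by
    obtain ⟨y, hyne, hy⟩ := aux9.join_vec G hcompl
    have hyy : y ⬝ᵥ y = ∑ v, y v * y v := rfl
    have h1 : (n : ℝ) * (y ⬝ᵥ y) ≤ y ⬝ᵥ (L *ᵥ y) := by
      rw [hquad, hyy]
      simpa [Fintype.card_fin] using hy
    have h2 : y ⬝ᵥ (L *ᵥ y) ≤ μl * (y ⬝ᵥ y) := by
      apply rayleigh_le_max hA _ y
      intro i
      rw [heig i]
      apply hmono
      have := (σ.symm i).2
      rw [Fin.le_def]
      simp only []
      omega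
    have hpos := dot_self_pos hyne
    nlinarith
  -- second smallest eigenvalue is at most |S|
  have hs : μ1 ≤ (S.card : ℝ) := by
    obtain ⟨x, hxne, hxsum, hxq⟩ := aux9.fiedler_vec G S hdis
    set r : ℝ := (S.card : ℝ) with hr
    have hr0 : (0:ℝ) ≤ r := Nat.cast_nonneg _
    have hxLx : x ⬝ᵥ (L *ᵥ x) ≤ r * (x ⬝ᵥ x) := by
      rw [hquad]
      have hxx : x ⬝ᵥ x = ∑ v, x v * x v := rfl
      rw [hxx]
      linarith
    set i₀ : Fin n := σ ⟨0, by omega⟩ with hi₀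
    have hm : ∀ i, i ≠ i₀ → μ1 ≤ hA.eigenvalues i := by
      intro i hi
      rw [heig i]
      apply hmono
      have hne : σ.symm i ≠ ⟨0, by omega⟩ := by
        intro h
        apply hi
        rw [hi₀, ← h, Equiv.apply_symm_apply]
      rw [Fin.le_def]
      simp only []
      have : (σ.symm i).val ≠ 0 := fun h => hne (Fin.ext h)
      omega
    set o : Fin n → ℝ := fun _ => 1 with ho
    have hLo : L *ᵥ o = 0 := lapMatrix_mulVec_const_eq_zero G
    have hoo : o ⬝ᵥ o = (n:ℝ) := by simp [ho, dotProduct]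
    have hox : o ⬝ᵥ x = 0 := by
      rw [ho]
      simpa [dotProduct] using hxsum
    by_cases hca : ecoef hA o i₀ = 0
    · have h1 := min_le_rayleigh_of_coef_zero hA hm o hca
      rw [hLo, dotProduct_zero, hoo] at h1
      have hn0 : (0:ℝ) < n := by positivity
      nlinarith
    · set a : ℝ := ecoef hA o i₀ with hadef
      set bb : ℝ := ecoef hA x i₀ with hbdef
      set y : Fin n → ℝ := fun v => a * x v - bb with hydef
      have hyfun : y = a • x - bb • o := by
        funext v
        simp [hydef, ho]
      have hcoefy : ecoef hA y i₀ = 0 := by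
        rw [ecoef_eq_dot, hyfun, dotProduct_sub, dotProduct_smul, dotProduct_smul,
          ← ecoef_eq_dot hA x i₀, ← ecoef_eq_dot hA o i₀, ← hadef, ← hbdef]
        simp [smul_eq_mul]
        ring
      have hyne : y ≠ 0 := by
        intro h
        have hbb : bb = 0 := by
          have hsum0 : ∑ v, y v = 0 := by rw [h]; simp
          rw [hydef] at hsum0
          simp only [Finset.sum_sub_distrib, ← Finset.mul_sum, hxsum,
            Finset.sum_const, Finset.card_univ, Fintype.card_fin] at hsum0
          have hn0 : (n:ℝ) ≠ 0 := by positivity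
          have h3 : (n:ℝ) * bb = 0 := by
            simp only [nsmul_eq_mul] at hsum0
            linarith
          rcases mul_eq_zero.mp h3 with h4 | h4
          · exact absurd h4 hn0
          · exact h4
        apply hxne
        funext v
        have h2 := congrFun h v
        rw [hydef] at h2
        simp only [Pi.zero_apply] at h2
        rw [hbb] at h2
        have : a * x v = 0 := by linarith
        rcases mul_eq_zero.mp this with h3 | h3
        · exact absurd h3 hca
        · simpa using h3
      have hLy : L *ᵥ y = a • (L *ᵥ x) := by
        rw [hyfun, Matrix.mulVec_sub, Matrix.mulVec_smul, Matrix.mulVec_smul, hLo,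
          smul_zero, sub_zero]
      have hoLx : o ⬝ᵥ (L *ᵥ x) = 0 := by
        rw [Matrix.dotProduct_mulVec, ← Matrix.mulVec_transpose,
          (isSymm_lapMatrix (G := G) (R := ℝ)).eq, ← hL, hLo]
        simp
      have hyLy : y ⬝ᵥ (L *ᵥ y) = a^2 * (x ⬝ᵥ (L *ᵥ x)) := by
        rw [hLy, hyfun, sub_dotProduct, smul_dotProduct, smul_dotProduct,
          dotProduct_smul, dotProduct_smul, hoLx]
        simp [smul_eq_mul]
        ring
      have hxo : x ⬝ᵥ o = 0 := by rw [dotProduct_comm]; exact hox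
      have hyy : y ⬝ᵥ y = a^2 * (x ⬝ᵥ x) + bb^2 * n := by
        rw [hyfun, sub_dotProduct, dotProduct_sub, dotProduct_sub, smul_dotProduct,
          smul_dotProduct, dotProduct_smul, dotProduct_smul, dotProduct_smul,
          dotProduct_smul]
        simp only [smul_dotProduct, dotProduct_smul, smul_eq_mul, hox, hoo, hxo,
          mul_zero, zero_mul, sub_zero, zero_sub]
        ring
      have h1 := min_le_rayleigh_of_coef_zero hA hm y hcoefy
      have hypos := dot_self_pos hyne
      have hxpos := dot_self_pos hxne
      have h2 : y ⬝ᵥ (L *ᵥ y) ≤ r * (y ⬝ᵥ y) := by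
        rw [hyLy, hyy]
        have ha2 : (0:ℝ) ≤ a^2 := sq_nonneg a
        have hb2 : (0:ℝ) ≤ bb^2 * n := by positivity
        nlinarith
      nlinarith
  -- counting components
  have hcount : numComp G S + G.minDegree ≤ n := by
    have := aux9.card_comp_add_minDegree_le G S hdis
    rwa [Fintype.card_fin] at this
  have h0 : (0:ℝ) ≤ μ1 := by
    rw [hμ1, hσ ⟨1, by omega⟩]
    exact hPSD.eigenvalues_nonneg _
  set c : ℕ := numComp G S with hc
  have hc2 : 2 ≤ c := hdis
  have hden : (c:ℝ) ≤ μl - G.minDegree := by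
    have h1 : (c:ℝ) + G.minDegree ≤ (n:ℝ) := by exact_mod_cast hcount
    linarith
  have hden0 : (0:ℝ) < μl - G.minDegree := by
    have : (2:ℝ) ≤ (c:ℝ) := by exact_mod_cast hc2
    linarith
  have hfinal : μ1 / (μl - G.minDegree) * c ≤ μ1 := by
    rw [div_mul_eq_mul_div, div_le_iff₀ hden0]
    calc μ1 * c ≤ μ1 * (μl - G.minDegree) := mul_le_mul_of_nonneg_left hden h0
      _ = μ1 * (μl - G.minDegree) := rfl
  exact hfinal.trans hs
end

section
/- For a simple non-complete graph G, the second smallest Laplacian eigenvalue μ_2 is at most the vertex connectivity κ, which is at most the minimum degree δ: μ_2 ≤ κ ≤ δ. -/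
open SimpleGraph Matrix

section Aux

variable {m : Type*} [Fintype m] [DecidableEq m]

lemma star_eq_tr (U : Matrix m m ℝ) : star U = Uᵀ := by
  rw [star_eq_conjTranspose, conjTranspose_eq_transpose_of_trivial]

lemma mydot_mulVec (A : Matrix m m ℝ) (hA : A.IsHermitian) (x z : m → ℝ) :
    x ⬝ᵥ (A *ᵥ z) = ∑ i, hA.eigenvalues i *
      (((star (hA.eigenvectorUnitary : Matrix m m ℝ)) *ᵥ x) i *
       ((star (hA.eigenvectorUnitary : Matrix m m ℝ)) *ᵥ z) i) := by
  set U := (hA.eigenvectorUnitary : Matrix m m ℝ) with hU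
  have hsp := hA.spectral_theorem
  rw [Unitary.conjStarAlgAut_apply, ← hU] at hsp
  have hdiag : (RCLike.ofReal ∘ hA.eigenvalues : m → ℝ) = hA.eigenvalues := by
    funext i; simp [RCLike.ofReal]
  conv_lhs => rw [hsp]
  rw [hdiag, ← mulVec_mulVec, ← mulVec_mulVec, dotProduct_mulVec]
  have hxU : x ᵥ* U = star U *ᵥ x := by
    rw [star_eq_tr, mulVec_transpose]
  rw [hxU, dotProduct_mulVec]
  have : (star U *ᵥ x) ᵥ* diagonal hA.eigenvalues
      = fun i => hA.eigenvalues i * (star U *ᵥ x) i := by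
    funext i; rw [vecMul_diagonal]; ring
  rw [this, dotProduct]
  simp [mul_assoc]

lemma mydot_self (A : Matrix m m ℝ) (hA : A.IsHermitian) (x z : m → ℝ) :
    x ⬝ᵥ z = ∑ i,
      (((star (hA.eigenvectorUnitary : Matrix m m ℝ)) *ᵥ x) i *
       ((star (hA.eigenvectorUnitary : Matrix m m ℝ)) *ᵥ z) i) := by
  set U := (hA.eigenvectorUnitary : Matrix m m ℝ) with hU
  have h1 : (star U *ᵥ x) ⬝ᵥ (star U *ᵥ z) = x ⬝ᵥ z := by
    rw [dotProduct_mulVec]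
    have hxU : (star U *ᵥ x) ᵥ* star U = ((star U)ᵀ * star U) *ᵥ x := by
      rw [← mulVec_mulVec, ← mulVec_transpose]
    rw [hxU]
    have h3 : (star U)ᵀ * star U = 1 := by
      have h2 : U * star U = 1 := (Matrix.mem_unitaryGroup_iff).mp hA.eigenvectorUnitary.2
      rw [star_eq_tr, transpose_transpose, ← star_eq_tr, h2]
    rw [h3, one_mulVec]
  rw [← h1, dotProduct]

lemma second_eig_le {n : ℕ} (h1 : 1 < n) (A : Matrix (Fin n) (Fin n) ℝ)
    (hPSD : A.PosSemidef) {μ : Fin n → ℝ} (hmono : Monotone μ) (σ : Fin n ≃ Fin n)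
    (hσ : ∀ i, μ i = hPSD.1.eigenvalues (σ i)) (o x : Fin n → ℝ)
    (hAo : A *ᵥ o = 0) (hoo : 0 < o ⬝ᵥ o) (hox : o ⬝ᵥ x = 0) :
    μ ⟨1, h1⟩ * (x ⬝ᵥ x) ≤ x ⬝ᵥ (A *ᵥ x) := by
  have hA := hPSD.1
  have hxA : x ⬝ᵥ (A *ᵥ x) = _ := mydot_mulVec A hA x x
  have hxx : x ⬝ᵥ x = _ := mydot_self A hA x x
  have hoA : (∑ i, hA.eigenvalues i *
      (((star (hA.eigenvectorUnitary : Matrix (Fin n) (Fin n) ℝ)) *ᵥ o) i *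
       ((star (hA.eigenvectorUnitary : Matrix (Fin n) (Fin n) ℝ)) *ᵥ o) i)) = 0 := by
    rw [← mydot_mulVec A hA o o, hAo]; simp
  have hoosum : o ⬝ᵥ o = _ := mydot_self A hA o o
  have hoxsum : o ⬝ᵥ x = _ := mydot_self A hA o x
  rw [hoosum] at hoo
  rw [hoxsum] at hox
  set lam := hA.eigenvalues with hlam
  set cx := (star (hA.eigenvectorUnitary : Matrix (Fin n) (Fin n) ℝ)) *ᵥ x with hcx
  set co := (star (hA.eigenvectorUnitary : Matrix (Fin n) (Fin n) ℝ)) *ᵥ o with hco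
  set m := μ ⟨1, h1⟩ with hm
  set z0 : Fin n := ⟨0, by omega⟩ with hz0
  have key : ∀ v, v ≠ σ z0 → m ≤ lam v := by
    intro v hv
    have hj : σ (σ.symm v) = v := σ.apply_symm_apply v
    have hj0 : σ.symm v ≠ z0 := fun h => hv (by rw [← hj, h])
    have h1le : (⟨1, h1⟩ : Fin n) ≤ σ.symm v := by
      have hne : (σ.symm v).val ≠ 0 := fun h => hj0 (Fin.ext h)
      exact Fin.mk_le_of_le_val (by omega)
    calc m ≤ μ (σ.symm v) := hmono h1le
    _ = lam v := by rw [hσ, hj]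
  rw [hxA, hxx, Finset.mul_sum]
  apply Finset.sum_le_sum
  intro v _
  rcases le_or_gt m (lam (σ z0)) with hc | hc
  · have hmv : m ≤ lam v := by
      rcases eq_or_ne v (σ z0) with rfl | hv
      · exact hc
      · exact key v hv
    exact mul_le_mul_of_nonneg_right hmv (mul_self_nonneg _)
  · have hterm : ∀ i ∈ Finset.univ, 0 ≤ lam i * (co i * co i) := fun i _ =>
      mul_nonneg (hPSD.eigenvalues_nonneg i) (mul_self_nonneg _)
    have hzero := (Finset.sum_eq_zero_iff_of_nonneg hterm).mp hoA
    have hco0 : ∀ i, i ≠ σ z0 → co i = 0 := by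
      intro i hi
      have hpos : 0 < lam i :=
        lt_of_le_of_lt (hPSD.eigenvalues_nonneg (σ z0)) (lt_of_lt_of_le hc (key i hi))
      have h2 : co i * co i = 0 := by
        rcases mul_eq_zero.mp (hzero i (Finset.mem_univ i)) with h | h
        · exact absurd h (ne_of_gt hpos)
        · exact h
      exact mul_self_eq_zero.mp h2
    have hcoσ : co (σ z0) ≠ 0 := by
      intro h
      have hz : ∑ i, co i * co i = 0 := by
        apply Finset.sum_eq_zero
        intro i _
        rcases eq_or_ne i (σ z0) with rfl | hi
        · rw [h]; ring
        · rw [hco0 i hi]; ring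
      rw [hz] at hoo
      exact lt_irrefl 0 hoo
    have hcxσ : cx (σ z0) = 0 := by
      have hs : ∑ i, co i * cx i = co (σ z0) * cx (σ z0) := by
        apply Finset.sum_eq_single
        · intro i _ hi; rw [hco0 i hi]; ring
        · intro h; exact absurd (Finset.mem_univ _) h
      rw [hs] at hox
      rcases mul_eq_zero.mp hox with h | h
      · exact absurd h hcoσ
      · exact h
    rcases eq_or_ne v (σ z0) with rfl | hv
    · rw [hcxσ]; simp
    · exact mul_le_mul_of_nonneg_right (key v hv) (mul_self_nonneg _)


lemma cut_partition {n : ℕ} (G : SimpleGraph (Fin n)) (S : Finset (Fin n))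
    (hS : 2 ≤ numComp G S) :
    ∃ A B : Finset (Fin n), A.Nonempty ∧ B.Nonempty ∧
      (∀ v, (v ∈ A ∧ v ∉ B ∧ v ∉ S) ∨ (v ∈ B ∧ v ∉ A ∧ v ∉ S) ∨ (v ∈ S ∧ v ∉ A ∧ v ∉ B)) ∧
      (∀ a ∈ A, ∀ b ∈ B, ¬ G.Adj a b) := by
  classical
  set H := G.induce ((↑S : Set (Fin n))ᶜ) with hH
  have hnt : Nontrivial H.ConnectedComponent := by
    by_contra h
    have hs : Subsingleton H.ConnectedComponent := not_nontrivial_iff_subsingleton.mp h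
    unfold numComp at hS
    rcases isEmpty_or_nonempty H.ConnectedComponent with he | hne
    · rw [Nat.card_of_isEmpty] at hS; omega
    · rw [Nat.card_unique] at hS; omega
  obtain ⟨c1, c2, hc⟩ := hnt
  set P : Fin n → Prop := fun v => ∃ h : v ∈ ((↑S : Set (Fin n))ᶜ),
    H.connectedComponentMk ⟨v, h⟩ = c1 with hP
  refine ⟨Finset.univ.filter P, Finset.univ.filter (fun v => v ∉ S ∧ ¬ P v), ?_, ?_, ?_, ?_⟩
  · obtain ⟨u, hu⟩ := c1.exists_rep
    refine ⟨u.1, Finset.mem_filter.mpr ⟨Finset.mem_univ _, u.2, ?_⟩⟩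
    have : (⟨u.1, u.2⟩ : ((↑S : Set (Fin n))ᶜ : Set (Fin n))) = u := Subtype.ext rfl
    rw [this]
    exact hu
  · obtain ⟨w, hw⟩ := c2.exists_rep
    have hwS : w.1 ∉ S := by
      have h2 := w.2
      rw [Set.mem_compl_iff] at h2
      exact fun hh => h2 (Finset.mem_coe.mpr hh)
    refine ⟨w.1, Finset.mem_filter.mpr ⟨Finset.mem_univ _, hwS, ?_⟩⟩
    rintro ⟨h, hc1⟩
    apply hc
    rw [← hc1]
    have : (⟨w.1, h⟩ : ((↑S : Set (Fin n))ᶜ : Set (Fin n))) = w := Subtype.ext rfl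
    rw [this, ← hw]
    rfl
  · intro v
    by_cases hvS : v ∈ S
    · right; right
      refine ⟨hvS, ?_, ?_⟩
      · simp only [Finset.mem_filter]
        rintro ⟨-, h, -⟩
        exact h (by simpa using hvS)
      · simp only [Finset.mem_filter]
        rintro ⟨-, h, -⟩
        exact h hvS
    · by_cases hvP : P v
      · left
        refine ⟨Finset.mem_filter.mpr ⟨Finset.mem_univ _, hvP⟩, ?_, hvS⟩
        simp only [Finset.mem_filter]
        rintro ⟨-, -, h⟩
        exact h hvP
      · right; left
        refine ⟨Finset.mem_filter.mpr ⟨Finset.mem_univ _, hvS, hvP⟩, ?_, hvS⟩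
        simp only [Finset.mem_filter]
        rintro ⟨-, h⟩
        exact hvP h
  · intro a ha b hb hadj
    obtain ⟨-, haP⟩ := Finset.mem_filter.mp ha
    obtain ⟨-, hbS, hbP⟩ := Finset.mem_filter.mp hb
    obtain ⟨haS, hac⟩ := haP
    apply hbP
    have hbmem : b ∈ ((↑S : Set (Fin n))ᶜ) := by
      rw [Set.mem_compl_iff]
      exact fun hh => hbS (Finset.mem_coe.mp hh)
    refine ⟨hbmem, ?_⟩
    rw [← hac]
    apply SimpleGraph.ConnectedComponent.sound
    apply SimpleGraph.Adj.reachable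
    simp only [hH, comap_adj, Function.Embedding.coe_subtype]
    exact hadj.symm

lemma exists_nonadj {n : ℕ} (G : SimpleGraph (Fin n)) [DecidableRel G.Adj] (hnc : G ≠ ⊤) :
    ∃ u1 u2 : Fin n, u1 ≠ u2 ∧ ¬ G.Adj u1 u2 := by
  by_contra h
  push_neg at h
  apply hnc
  ext u w
  simp only [top_adj]
  constructor
  · exact fun ha => ha.ne
  · exact fun hne => h u w hne

lemma degree_le_of_nonadj {n : ℕ} (G : SimpleGraph (Fin n)) [DecidableRel G.Adj]
    {u1 u2 : Fin n} (hne : u1 ≠ u2) (hnadj : ¬ G.Adj u1 u2) : G.degree u1 ≤ n - 2 := by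
  have hsub : G.neighborFinset u1 ⊆ Finset.univ \ {u1, u2} := by
    intro x hx
    rw [SimpleGraph.mem_neighborFinset] at hx
    simp only [Finset.mem_sdiff, Finset.mem_univ, true_and, Finset.mem_insert,
      Finset.mem_singleton]
    push_neg
    exact ⟨fun h => G.irrefl (h ▸ hx), fun h => hnadj (h ▸ hx)⟩
  have hcard := Finset.card_le_card hsub
  rw [← SimpleGraph.card_neighborFinset_eq_degree]
  have h2 : ({u1, u2} : Finset (Fin n)).card = 2 := Finset.card_pair hne
  rw [Finset.card_sdiff_of_subset (Finset.subset_univ _), h2, Finset.card_univ, Fintype.card_fin] at hcard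
  exact hcard

lemma isolated_reachable {V : Type*} (H : SimpleGraph V) (a : V)
    (hiso : ∀ u, ¬ H.Adj a u) (b : V) (hr : H.Reachable a b) : a = b := by
  obtain ⟨p⟩ := hr
  cases p with
  | nil => rfl
  | cons h q => exact absurd h (hiso _)

lemma exists_cut_minDegree {n : ℕ} (hn : 2 ≤ n) (G : SimpleGraph (Fin n))
    [DecidableRel G.Adj] (hnc : G ≠ ⊤) :
    ∃ S : Finset (Fin n), S.card = G.minDegree ∧ 2 ≤ numComp G S := by
  classical
  haveI : Nonempty (Fin n) := ⟨⟨0, by omega⟩⟩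
  obtain ⟨u1, u2, hne, hnadj⟩ := exists_nonadj G hnc
  obtain ⟨v, hv⟩ := G.exists_minimal_degree_vertex
  set S := G.neighborFinset v with hSdef
  have hScard : S.card = G.minDegree := by
    rw [hSdef, SimpleGraph.card_neighborFinset_eq_degree, hv]
  have hSle : S.card ≤ n - 2 := by
    rw [hScard]
    exact le_trans (G.minDegree_le_degree u1) (degree_le_of_nonadj G hne hnadj)
  have hT : ((insert v S)ᶜ : Finset (Fin n)).Nonempty := by
    rw [← Finset.card_pos, Finset.card_compl, Fintype.card_fin]
    have := Finset.card_insert_le v S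
    omega
  obtain ⟨w, hw⟩ := hT
  rw [Finset.mem_compl, Finset.mem_insert] at hw
  push_neg at hw
  obtain ⟨hwv, hwS⟩ := hw
  have hvmem : v ∈ ((↑S : Set (Fin n))ᶜ) := by
    rw [Set.mem_compl_iff]
    intro hh
    exact G.irrefl ((SimpleGraph.mem_neighborFinset G v v).mp (Finset.mem_coe.mp hh))
  have hwmem : w ∈ ((↑S : Set (Fin n))ᶜ) := by
    rw [Set.mem_compl_iff]
    exact fun hh => hwS (Finset.mem_coe.mp hh)
  set H := G.induce ((↑S : Set (Fin n))ᶜ) with hH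
  have hiso : ∀ u : ((↑S : Set (Fin n))ᶜ : Set (Fin n)), ¬ H.Adj ⟨v, hvmem⟩ u := by
    intro u h
    have hadj : G.Adj v u.1 := by
      simpa only [hH, comap_adj, Function.Embedding.coe_subtype] using h
    have h2 := u.2
    rw [Set.mem_compl_iff] at h2
    exact h2 (Finset.mem_coe.mpr ((SimpleGraph.mem_neighborFinset G v u.1).mpr hadj))
  have hcne : H.connectedComponentMk ⟨v, hvmem⟩ ≠ H.connectedComponentMk ⟨w, hwmem⟩ := by
    intro heq
    have hr := SimpleGraph.ConnectedComponent.exact heq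
    have : (⟨v, hvmem⟩ : ((↑S : Set (Fin n))ᶜ : Set (Fin n))) = ⟨w, hwmem⟩ :=
      isolated_reachable H _ hiso _ hr
    exact hwv (congrArg Subtype.val this).symm
  refine ⟨S, hScard, ?_⟩
  unfold numComp
  letI : Fintype H.ConnectedComponent := Fintype.ofFinite _
  rw [Nat.card_eq_fintype_card]
  exact Fintype.one_lt_card_iff_nontrivial.mpr ⟨_, _, hcne⟩

section
variable {n : ℕ} (G : SimpleGraph (Fin n)) [DecidableRel G.Adj]
  (S A B : Finset (Fin n))

lemma test_sum_zero (hA : A.Nonempty) (hB : B.Nonempty) :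
    (fun _ => (1:ℝ)) ⬝ᵥ (fun v => (if v ∈ A then (A.card:ℝ)⁻¹ else 0)
      - (if v ∈ B then (B.card:ℝ)⁻¹ else 0)) = 0 := by
  have ha : (A.card : ℝ) ≠ 0 := Nat.cast_ne_zero.mpr (Finset.card_ne_zero_of_mem hA.choose_spec)
  have hb : (B.card : ℝ) ≠ 0 := Nat.cast_ne_zero.mpr (Finset.card_ne_zero_of_mem hB.choose_spec)
  simp only [dotProduct, one_mul, Finset.sum_sub_distrib]
  rw [Finset.sum_ite_mem, Finset.sum_ite_mem, Finset.univ_inter, Finset.univ_inter,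
    Finset.sum_const, Finset.sum_const, nsmul_eq_mul, nsmul_eq_mul,
    mul_inv_cancel₀ ha, mul_inv_cancel₀ hb, sub_self]

lemma test_sum_sq (hA : A.Nonempty) (hB : B.Nonempty)
    (hdisj : ∀ v, v ∈ A → v ∉ B) :
    (fun v => (if v ∈ A then (A.card:ℝ)⁻¹ else 0) - (if v ∈ B then (B.card:ℝ)⁻¹ else 0)) ⬝ᵥ
    (fun v => (if v ∈ A then (A.card:ℝ)⁻¹ else 0) - (if v ∈ B then (B.card:ℝ)⁻¹ else 0))
      = (A.card:ℝ)⁻¹ + (B.card:ℝ)⁻¹ := by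
  have ha : (A.card : ℝ) ≠ 0 := Nat.cast_ne_zero.mpr (Finset.card_ne_zero_of_mem hA.choose_spec)
  have hb : (B.card : ℝ) ≠ 0 := Nat.cast_ne_zero.mpr (Finset.card_ne_zero_of_mem hB.choose_spec)
  simp only [dotProduct]
  have hpt : ∀ v, ((if v ∈ A then (A.card:ℝ)⁻¹ else 0) - (if v ∈ B then (B.card:ℝ)⁻¹ else 0))
      * ((if v ∈ A then (A.card:ℝ)⁻¹ else 0) - (if v ∈ B then (B.card:ℝ)⁻¹ else 0))
      = (if v ∈ A then (A.card:ℝ)⁻¹ * (A.card:ℝ)⁻¹ else 0)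
        + (if v ∈ B then (B.card:ℝ)⁻¹ * (B.card:ℝ)⁻¹ else 0) := by
    intro v
    by_cases hv : v ∈ A
    · have hv' : v ∉ B := hdisj v hv
      simp [hv, hv']
    · by_cases hv' : v ∈ B <;> simp [hv, hv']
  simp only [hpt]
  rw [Finset.sum_add_distrib, Finset.sum_ite_mem, Finset.sum_ite_mem, Finset.univ_inter,
    Finset.univ_inter, Finset.sum_const, Finset.sum_const, nsmul_eq_mul, nsmul_eq_mul]
  rw [← mul_assoc, ← mul_assoc, mul_inv_cancel₀ ha, mul_inv_cancel₀ hb, one_mul, one_mul]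
end

lemma test_quad {n : ℕ} (G : SimpleGraph (Fin n)) [DecidableRel G.Adj]
    (S A B : Finset (Fin n)) (hA : A.Nonempty) (hB : B.Nonempty)
    (htri : ∀ v, (v ∈ A ∧ v ∉ B ∧ v ∉ S) ∨ (v ∈ B ∧ v ∉ A ∧ v ∉ S) ∨ (v ∈ S ∧ v ∉ A ∧ v ∉ B))
    (hnoadj : ∀ a ∈ A, ∀ b ∈ B, ¬ G.Adj a b) :
    (fun v => (if v ∈ A then (A.card:ℝ)⁻¹ else 0) - (if v ∈ B then (B.card:ℝ)⁻¹ else 0)) ⬝ᵥ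
      (G.lapMatrix ℝ *ᵥ (fun v => (if v ∈ A then (A.card:ℝ)⁻¹ else 0)
        - (if v ∈ B then (B.card:ℝ)⁻¹ else 0)))
      ≤ (S.card : ℝ) * ((A.card:ℝ)⁻¹ + (B.card:ℝ)⁻¹) := by
  have ha : (A.card : ℝ) ≠ 0 := Nat.cast_ne_zero.mpr (Finset.card_ne_zero_of_mem hA.choose_spec)
  have hb : (B.card : ℝ) ≠ 0 := Nat.cast_ne_zero.mpr (Finset.card_ne_zero_of_mem hB.choose_spec)
  set x : Fin n → ℝ := fun v => (if v ∈ A then (A.card:ℝ)⁻¹ else 0)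
    - (if v ∈ B then (B.card:ℝ)⁻¹ else 0) with hx
  have hquad : x ⬝ᵥ (G.lapMatrix ℝ *ᵥ x)
      = (∑ i : Fin n, ∑ j : Fin n, if G.Adj i j then (x i - x j)^2 else 0) / 2 := by
    rw [← Matrix.toLinearMap₂'_apply', SimpleGraph.lapMatrix_toLinearMap₂' ℝ]
  rw [hquad]
  set g : Fin n → Fin n → ℝ := fun i j => (if i ∈ S then (1:ℝ) else 0) *
    ((if j ∈ A then (A.card:ℝ)⁻¹ * (A.card:ℝ)⁻¹ else 0)
      + (if j ∈ B then (B.card:ℝ)⁻¹ * (B.card:ℝ)⁻¹ else 0)) with hg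
  have hgnn : ∀ i j, 0 ≤ g i j := by
    intro i j
    rw [hg]
    dsimp only
    split_ifs <;> simp <;> positivity
  have hterm : ∀ i j, (if G.Adj i j then (x i - x j)^2 else 0) ≤ g i j + g j i := by
    intro i j
    by_cases hadj : G.Adj i j
    · rw [if_pos hadj]
      rcases htri i with ⟨hiA, hiB, hiS⟩ | ⟨hiB, hiA, hiS⟩ | ⟨hiS, hiA, hiB⟩ <;>
        rcases htri j with ⟨hjA, hjB, hjS⟩ | ⟨hjB, hjA, hjS⟩ | ⟨hjS, hjA, hjB⟩
      · simp [hx, hg, hiA, hiB, hiS, hjA, hjB, hjS]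
      · exact absurd hadj (hnoadj i hiA j hjB)
      · simp [hx, hg, hiA, hiB, hiS, hjA, hjB, hjS]
        exact le_of_eq (by ring)
      · exact absurd hadj.symm (hnoadj j hjA i hiB)
      · simp [hx, hg, hiA, hiB, hiS, hjA, hjB, hjS]
      · simp [hx, hg, hiA, hiB, hiS, hjA, hjB, hjS]
        exact le_of_eq (by ring)
      · simp [hx, hg, hiA, hiB, hiS, hjA, hjB, hjS]
        exact le_of_eq (by ring)
      · simp [hx, hg, hiA, hiB, hiS, hjA, hjB, hjS]
        exact le_of_eq (by ring)
      · simp [hx, hg, hiA, hiB, hiS, hjA, hjB, hjS]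
    · rw [if_neg hadj]
      exact add_nonneg (hgnn i j) (hgnn j i)
  have hsumg : ∑ i : Fin n, ∑ j : Fin n, g i j = (S.card : ℝ) * ((A.card:ℝ)⁻¹ + (B.card:ℝ)⁻¹) := by
    have hinner : ∀ i : Fin n, ∑ j : Fin n, g i j
        = (if i ∈ S then (1:ℝ) else 0) * ((A.card:ℝ)⁻¹ + (B.card:ℝ)⁻¹) := by
      intro i
      rw [hg]
      dsimp only
      rw [← Finset.mul_sum]
      congr 1
      rw [Finset.sum_add_distrib, Finset.sum_ite_mem, Finset.sum_ite_mem, Finset.univ_inter,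
        Finset.univ_inter, Finset.sum_const, Finset.sum_const, nsmul_eq_mul, nsmul_eq_mul,
        ← mul_assoc, ← mul_assoc, mul_inv_cancel₀ ha, mul_inv_cancel₀ hb, one_mul, one_mul]
    simp only [hinner]
    rw [← Finset.sum_mul, Finset.sum_ite_mem, Finset.univ_inter, Finset.sum_const,
      nsmul_eq_mul, mul_one]
  calc (∑ i : Fin n, ∑ j : Fin n, if G.Adj i j then (x i - x j)^2 else 0) / 2
      ≤ (∑ i : Fin n, ∑ j : Fin n, (g i j + g j i)) / 2 := by
        apply div_le_div_of_nonneg_right ?_ (by norm_num)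
        · exact Finset.sum_le_sum fun i _ => Finset.sum_le_sum fun j _ => hterm i j
    _ = (S.card : ℝ) * ((A.card:ℝ)⁻¹ + (B.card:ℝ)⁻¹) := by
        simp only [Finset.sum_add_distrib]
        rw [Finset.sum_comm (f := fun i j => g j i)]
        rw [hsumg]
        ring

end Aux

theorem stmt11 {n : ℕ} [NeZero n] (hn : 2 ≤ n) (G : SimpleGraph (Fin n)) [DecidableRel G.Adj]
    (hnc : G ≠ ⊤) (μ : Fin n → ℝ) (hμ : IsLapSpectrum G μ)
    (κ : ℕ) (hκ : κ = sInf {k : ℕ | ∃ S : Finset (Fin n), S.card = k ∧ 2 ≤ numComp G S}) :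
    μ ⟨1, by omega⟩ ≤ (κ : ℝ) ∧ κ ≤ G.minDegree := by
  obtain ⟨hmono, σ, hσ⟩ := hμ
  obtain ⟨S₀, hS₀card, hS₀⟩ := exists_cut_minDegree hn G hnc
  have hKne : G.minDegree ∈ {k : ℕ | ∃ S : Finset (Fin n), S.card = k ∧ 2 ≤ numComp G S} :=
    ⟨S₀, hS₀card, hS₀⟩
  have hκδ : κ ≤ G.minDegree := hκ ▸ Nat.sInf_le hKne
  refine ⟨?_, hκδ⟩
  have hκmem : κ ∈ {k : ℕ | ∃ S : Finset (Fin n), S.card = k ∧ 2 ≤ numComp G S} :=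
    hκ ▸ Nat.sInf_mem ⟨G.minDegree, hKne⟩
  obtain ⟨S, hScard, hS2⟩ := hκmem
  obtain ⟨A, B, hA, hB, htri, hnoadj⟩ := cut_partition G S hS2
  have hdisj : ∀ v, v ∈ A → v ∉ B := by
    intro v hv
    rcases htri v with ⟨-, h, -⟩ | ⟨-, h, -⟩ | ⟨-, h, -⟩
    · exact h
    · exact fun _ => h hv
    · exact fun _ => h hv
  set x : Fin n → ℝ := fun v => (if v ∈ A then (A.card:ℝ)⁻¹ else 0)
    - (if v ∈ B then (B.card:ℝ)⁻¹ else 0) with hx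
  have ha : (0:ℝ) < (A.card : ℝ) := by
    exact_mod_cast Finset.card_pos.mpr hA
  have hb : (0:ℝ) < (B.card : ℝ) := by
    exact_mod_cast Finset.card_pos.mpr hB
  have hxx : x ⬝ᵥ x = (A.card:ℝ)⁻¹ + (B.card:ℝ)⁻¹ := test_sum_sq A B hA hB hdisj
  have hxxpos : 0 < x ⬝ᵥ x := by
    rw [hxx]; positivity
  have h1 : 1 < n := by omega
  have hσ' : ∀ i, μ i = (SimpleGraph.posSemidef_lapMatrix ℝ G).1.eigenvalues (σ i) := hσ
  have hmain : μ ⟨1, h1⟩ * (x ⬝ᵥ x) ≤ x ⬝ᵥ (G.lapMatrix ℝ *ᵥ x) := by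
    refine second_eig_le h1 (G.lapMatrix ℝ) (SimpleGraph.posSemidef_lapMatrix ℝ G)
      hmono σ hσ' (fun _ => (1:ℝ)) x ?_ ?_ ?_
    · exact G.lapMatrix_mulVec_const_eq_zero (R := ℝ)
    · have : ((fun _ => (1:ℝ)) : Fin n → ℝ) ⬝ᵥ ((fun _ => (1:ℝ)) : Fin n → ℝ) = (n : ℝ) := by
        simp [dotProduct]
      rw [this]
      exact_mod_cast Nat.lt_of_lt_of_le Nat.zero_lt_two hn
    · exact test_sum_zero A B hA hB
  have hquad : x ⬝ᵥ (G.lapMatrix ℝ *ᵥ x) ≤ (κ : ℝ) * (x ⬝ᵥ x) := by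
    rw [hxx, ← hScard]
    exact test_quad G S A B hA hB htri hnoadj
  have := le_trans hmain hquad
  exact le_of_mul_le_mul_right this hxxpos
end
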